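/- arXiv:math/0202094 — 8 statements merged into one kernel-verified Lean document; each statement's English description precedes it below -/
import Mathlib

section
/- Suppose the inner product ⟨·,·⟩ on 𝔪 is naturally reductive, i.e. ⟨[X,Y]_𝔪,Z⟩ + ⟨Y,[X,Z]_𝔪⟩ = 0 for all X,Y,Z ∈ 𝔪. Let Λ : 𝔪 → End(𝔪) be a linear map with each Λ(X) skew-adjoint, and T(X,Y) := Λ(X)Y − Λ(Y)X − [X,Y]_𝔪. Then the trilinear form ⟨T(X,Y),Z⟩ is totally skew-symmetric if and only if Λ(X)X = 0 for all X ∈ 𝔪. -/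
/-!
Write `T(X,Y) = Λ(X)Y − Λ(Y)X − [X,Y]_𝔪`. Both `Λ(X)` and, by natural reductivity, `[X,·]_𝔪`
are skew-adjoint on `𝔪`, so `⟨Λ(X)W, W⟩ = ⟨[X,W]_𝔪, W⟩ = 0` and `⟨T(X,W),W⟩ = −⟨Λ(W)X, W⟩`
= `⟨Λ(W)W, X⟩`. Total skew-symmetry forces this to vanish for all `X`, hence `Λ(W)W = 0` by
positivity. Conversely, if `Λ` is alternating on `𝔪` then `T(X,·) = 2Λ(X) − [X,·]_𝔪` on `𝔪`, a
skew-adjoint map, and `T` is antisymmetric in its two arguments anyway.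
-/

namespace LinearMap.BilinForm

variable {R M : Type*} [CommRing R] [AddCommGroup M] [Module R M]
  {B : LinearMap.BilinForm R M} {𝔪 : Submodule R M}

theorem apply_swap_eq_neg_of_skew (hBsymm : ∀ x ∈ 𝔪, ∀ y ∈ 𝔪, B x y = B y x) {f : M → M}
    (hf𝔪 : ∀ y ∈ 𝔪, f y ∈ 𝔪) (hf : ∀ y ∈ 𝔪, ∀ z ∈ 𝔪, B (f y) z + B y (f z) = 0)
    {y z : M} (hy : y ∈ 𝔪) (hz : z ∈ 𝔪) : B (f y) z = -B (f z) y := by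
  rw [← hBsymm y hy (f z) (hf𝔪 z hz)]
  exact eq_neg_of_add_eq_zero_left (hf y hy z hz)

theorem apply_self_eq_zero_of_skew [NoZeroDivisors R] [CharZero R]
    (hBsymm : ∀ x ∈ 𝔪, ∀ y ∈ 𝔪, B x y = B y x) {f : M → M}
    (hf𝔪 : ∀ y ∈ 𝔪, f y ∈ 𝔪) (hf : ∀ y ∈ 𝔪, ∀ z ∈ 𝔪, B (f y) z + B y (f z) = 0)
    {y : M} (hy : y ∈ 𝔪) : B (f y) y = 0 :=
  self_eq_neg.mp (apply_swap_eq_neg_of_skew hBsymm hf𝔪 hf hy hy)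

theorem eq_zero_of_forall_apply_eq_zero [Preorder R] (hBpos : ∀ x ∈ 𝔪, x ≠ 0 → 0 < B x x)
    {v : M} (hv : v ∈ 𝔪) (h : ∀ z ∈ 𝔪, B v z = 0) : v = 0 := by
  by_contra hne
  exact (hBpos v hv hne).ne' (h v hv)

end LinearMap.BilinForm

theorem LinearMap.apply_swap_eq_neg_of_forall_apply_self_eq_zero {R M N : Type*} [CommRing R]
    [AddCommGroup M] [Module R M] [AddCommGroup N] [Module R N] {𝔪 : Submodule R M}
    {Λ : M →ₗ[R] M →ₗ[R] N} (h : ∀ x ∈ 𝔪, Λ x x = 0) {x y : M} (hx : x ∈ 𝔪) (hy : y ∈ 𝔪) :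
    Λ x y = -Λ y x := by
  have hΛ𝔪 : (Λ.compl₁₂ 𝔪.subtype 𝔪.subtype).IsAlt := fun w => h w w.2
  simpa using (hΛ𝔪.neg ⟨y, hy⟩ ⟨x, hx⟩).symm

section Torsion

variable {R 𝔤 : Type*} [CommRing R] [LieRing 𝔤] [LieAlgebra R 𝔤]

def torsion (Λ : 𝔤 →ₗ[R] 𝔤 →ₗ[R] 𝔤) (p𝔪 : 𝔤 →ₗ[R] 𝔤) (x y : 𝔤) : 𝔤 :=
  Λ x y - Λ y x - p𝔪 ⁅x, y⁆

variable {Λ : 𝔤 →ₗ[R] 𝔤 →ₗ[R] 𝔤} {p𝔪 : 𝔤 →ₗ[R] 𝔤}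

theorem torsion_swap (x y : 𝔤) : torsion Λ p𝔪 y x = -torsion Λ p𝔪 x y := by
  rw [torsion, torsion, ← lie_skew, map_neg]
  abel

variable {B : LinearMap.BilinForm R 𝔤} {𝔪 : Submodule R 𝔤}
  (hBsymm : ∀ x ∈ 𝔪, ∀ y ∈ 𝔪, B x y = B y x) (hp𝔪 : ∀ x, p𝔪 x ∈ 𝔪)
  (hnat : ∀ x ∈ 𝔪, ∀ y ∈ 𝔪, ∀ z ∈ 𝔪, B (p𝔪 ⁅x, y⁆) z + B y (p𝔪 ⁅x, z⁆) = 0)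
  (hΛmem : ∀ x ∈ 𝔪, ∀ y ∈ 𝔪, Λ x y ∈ 𝔪)
  (hΛskew : ∀ x ∈ 𝔪, ∀ y ∈ 𝔪, ∀ z ∈ 𝔪, B (Λ x y) z + B y (Λ x z) = 0)
include hBsymm hp𝔪 hnat hΛmem hΛskew

theorem apply_self_eq_zero_of_torsion_apply_self [NoZeroDivisors R] [CharZero R] [Preorder R]
    (hBpos : ∀ x ∈ 𝔪, x ≠ 0 → 0 < B x x) {w : 𝔤} (hw : w ∈ 𝔪)
    (hT : ∀ x ∈ 𝔪, B (torsion Λ p𝔪 x w) w = 0) : Λ w w = 0 := by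
  refine LinearMap.BilinForm.eq_zero_of_forall_apply_eq_zero hBpos (hΛmem w hw w hw) ?_
  intro x hx
  have hΛ : B (Λ x w) w = 0 :=
    LinearMap.BilinForm.apply_self_eq_zero_of_skew hBsymm (hΛmem x hx) (hΛskew x hx) hw
  have had : B (p𝔪 ⁅x, w⁆) w = 0 :=
    LinearMap.BilinForm.apply_self_eq_zero_of_skew (f := fun y => p𝔪 ⁅x, y⁆) hBsymm
      (fun y _ => hp𝔪 _) (hnat x hx) hw
  have hT' := hT x hx
  simp only [torsion, map_sub, LinearMap.sub_apply, hΛ, had] at hT'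
  rw [LinearMap.BilinForm.apply_swap_eq_neg_of_skew hBsymm (hΛmem w hw) (hΛskew w hw) hw hx]
  linear_combination hT'

theorem torsion_apply_swap_of_forall_apply_self_eq_zero (hΛ : ∀ x ∈ 𝔪, Λ x x = 0)
    {x y z : 𝔤} (hx : x ∈ 𝔪) (hy : y ∈ 𝔪) (hz : z ∈ 𝔪) :
    B (torsion Λ p𝔪 x y) z = -B (torsion Λ p𝔪 x z) y := by
  have hΛxy := LinearMap.BilinForm.apply_swap_eq_neg_of_skew hBsymm (hΛmem x hx) (hΛskew x hx)
    hy hz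
  have hadxy := LinearMap.BilinForm.apply_swap_eq_neg_of_skew (f := fun y => p𝔪 ⁅x, y⁆) hBsymm
    (fun y _ => hp𝔪 _) (hnat x hx) hy hz
  rw [torsion, torsion, LinearMap.apply_swap_eq_neg_of_forall_apply_self_eq_zero hΛ hy hx,
    LinearMap.apply_swap_eq_neg_of_forall_apply_self_eq_zero hΛ hz hx]
  simp only [map_sub, map_neg, LinearMap.sub_apply, LinearMap.neg_apply]
  linear_combination 2 * hΛxy - hadxy

end Torsion

theorem stmt1_general
    {𝔤 : Type*} [LieRing 𝔤] [LieAlgebra ℝ 𝔤]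
    (𝔪 : Submodule ℝ 𝔤)
    (p𝔪 : 𝔤 →ₗ[ℝ] 𝔤)
    (hmem𝔪 : ∀ x, p𝔪 x ∈ 𝔪)
    (B : LinearMap.BilinForm ℝ 𝔤)
    (hBsymm : ∀ x ∈ 𝔪, ∀ y ∈ 𝔪, B x y = B y x)
    (hBpos : ∀ x ∈ 𝔪, x ≠ 0 → 0 < B x x)
    (hnat : ∀ x ∈ 𝔪, ∀ y ∈ 𝔪, ∀ z ∈ 𝔪, B (p𝔪 ⁅x, y⁆) z + B y (p𝔪 ⁅x, z⁆) = 0)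
    (Λ : 𝔤 →ₗ[ℝ] 𝔤 →ₗ[ℝ] 𝔤)
    (hΛmem : ∀ x ∈ 𝔪, ∀ y ∈ 𝔪, Λ x y ∈ 𝔪)
    (hΛskew : ∀ x ∈ 𝔪, ∀ y ∈ 𝔪, ∀ z ∈ 𝔪, B (Λ x y) z + B y (Λ x z) = 0) :
    (∀ x ∈ 𝔪, ∀ y ∈ 𝔪, ∀ z ∈ 𝔪,
        B (Λ x y - Λ y x - p𝔪 ⁅x, y⁆) z = - B (Λ y x - Λ x y - p𝔪 ⁅y, x⁆) z ∧
        B (Λ x y - Λ y x - p𝔪 ⁅x, y⁆) z = - B (Λ x z - Λ z x - p𝔪 ⁅x, z⁆) y) ↔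
    (∀ x ∈ 𝔪, Λ x x = 0) := by
  constructor
  · intro hT w hw
    exact apply_self_eq_zero_of_torsion_apply_self hBsymm hmem𝔪 hnat hΛmem hΛskew hBpos hw
      fun x hx => self_eq_neg.mp (hT x hx w hw w hw).2
  · intro hΛ x hx y hy z hz
    refine ⟨?_, torsion_apply_swap_of_forall_apply_self_eq_zero hBsymm hmem𝔪 hnat hΛmem hΛskew
      hΛ hx hy hz⟩
    change B (torsion Λ p𝔪 x y) z = -B (torsion Λ p𝔪 y x) z
    rw [torsion_swap x y, map_neg, LinearMap.neg_apply, neg_neg]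

/-- If the inner product on `𝔪` is naturally reductive, then the torsion
trilinear form `⟨Λ(X)Y − Λ(Y)X − [X,Y]_𝔪, Z⟩` is totally skew-symmetric iff
`Λ(X)X = 0` for all `X ∈ 𝔪`. -/
theorem stmt1
    {𝔤 : Type*} [LieRing 𝔤] [LieAlgebra ℝ 𝔤] [FiniteDimensional ℝ 𝔤]
    (𝔥 𝔪 : Submodule ℝ 𝔤)
    (p𝔥 p𝔪 : 𝔤 →ₗ[ℝ] 𝔤)
    (hsum : ∀ x, p𝔥 x + p𝔪 x = x)
    (hmem𝔥 : ∀ x, p𝔥 x ∈ 𝔥) (hmem𝔪 : ∀ x, p𝔪 x ∈ 𝔪)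
    (hid𝔥 : ∀ x ∈ 𝔥, p𝔥 x = x) (hid𝔪 : ∀ x ∈ 𝔪, p𝔪 x = x)
    (hsub : ∀ x ∈ 𝔥, ∀ y ∈ 𝔥, ⁅x, y⁆ ∈ 𝔥)
    (hhm : ∀ x ∈ 𝔥, ∀ y ∈ 𝔪, ⁅x, y⁆ ∈ 𝔪)
    (B : LinearMap.BilinForm ℝ 𝔤)
    (hBsymm : ∀ x ∈ 𝔪, ∀ y ∈ 𝔪, B x y = B y x)
    (hBpos : ∀ x ∈ 𝔪, x ≠ 0 → 0 < B x x)
    (hnat : ∀ x ∈ 𝔪, ∀ y ∈ 𝔪, ∀ z ∈ 𝔪, B (p𝔪 ⁅x, y⁆) z + B y (p𝔪 ⁅x, z⁆) = 0)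
    (Λ : 𝔤 →ₗ[ℝ] 𝔤 →ₗ[ℝ] 𝔤)
    (hΛmem : ∀ x ∈ 𝔪, ∀ y ∈ 𝔪, Λ x y ∈ 𝔪)
    (hΛskew : ∀ x ∈ 𝔪, ∀ y ∈ 𝔪, ∀ z ∈ 𝔪, B (Λ x y) z + B y (Λ x z) = 0) :
    (∀ x ∈ 𝔪, ∀ y ∈ 𝔪, ∀ z ∈ 𝔪,
        B (Λ x y - Λ y x - p𝔪 ⁅x, y⁆) z = - B (Λ y x - Λ x y - p𝔪 ⁅y, x⁆) z ∧
        B (Λ x y - Λ y x - p𝔪 ⁅x, y⁆) z = - B (Λ x z - Λ z x - p𝔪 ⁅x, z⁆) y) ↔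
    (∀ x ∈ 𝔪, Λ x x = 0) :=
  stmt1_general 𝔪 p𝔪 hmem𝔪 B hBsymm hBpos hnat Λ hΛmem hΛskew
end

section
/- For all X,Y ∈ 𝔪 the Ricci tensor of the connection Λ^t satisfies Ric^t(X,Y) := Σ_i ⟨R^t(X,Z_i)Z_i, Y⟩ = Σ_i [ (t−t²)⟨[X,Z_i]_𝔪,[Y,Z_i]_𝔪⟩ + Q_𝔥([X,Z_i]_𝔥,[Y,Z_i]_𝔥) ], and consequently the scalar curvature satisfies Scal^t := Σ_j Ric^t(Z_j,Z_j) = Σ_{i,j} [ (t−t²)⟨[Z_i,Z_j]_𝔪,[Z_i,Z_j]_𝔪⟩ + Q_𝔥([Z_i,Z_j]_𝔥,[Z_i,Z_j]_𝔥) ]. -/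
open scoped BigOperators

/-- Curvature `R^t(X,Y)Z` of the connection `Λ^t(X)Y = t[X,Y]_𝔪`. -/
noncomputable def curvRt {𝔤 : Type*} [LieRing 𝔤] [LieAlgebra ℝ 𝔤]
    (p𝔥 p𝔪 : 𝔤 →ₗ[ℝ] 𝔤) (t : ℝ) (x y z : 𝔤) : 𝔤 :=
  t • p𝔪 ⁅x, t • p𝔪 ⁅y, z⁆⁆ - t • p𝔪 ⁅y, t • p𝔪 ⁅x, z⁆⁆
    - t • p𝔪 ⁅p𝔪 ⁅x, y⁆, z⁆ - ⁅p𝔥 ⁅x, y⁆, z⁆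

/-!
Every summand of the Ricci and scalar curvature sums is evaluated separately: for `z` arbitrary,
`R^t(x,z)z = (t² - t)[[x,z]_𝔪, z]_𝔪 - [[x,z]_𝔥, z]`, and ad-invariance of `Q` moves the outer
bracket with `z` to the other argument, where the orthogonality of `𝔥` and `𝔪` splits
`Q(·, [y,z])` into its `𝔪`- and `𝔥`-parts.
-/

section ReductiveDecomposition

variable {𝔤 : Type*} [LieRing 𝔤] [LieAlgebra ℝ 𝔤] {𝔥 𝔪 : Submodule ℝ 𝔤}
  {p𝔥 p𝔪 : 𝔤 →ₗ[ℝ] 𝔤} {Q : LinearMap.BilinForm ℝ 𝔤}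

theorem curvRt_self (t : ℝ) (x z : 𝔤) :
    curvRt p𝔥 p𝔪 t x z z = (t ^ 2 - t) • p𝔪 ⁅p𝔪 ⁅x, z⁆, z⁆ - ⁅p𝔥 ⁅x, z⁆, z⁆ := by
  have hz : ⁅z, p𝔪 ⁅x, z⁆⁆ = -⁅p𝔪 ⁅x, z⁆, z⁆ := (lie_skew _ _).symm
  simp only [curvRt, lie_self, map_zero, smul_zero, lie_zero, zero_sub, lie_smul, map_smul, hz,
    map_neg, smul_neg, smul_smul]
  module

theorem bilin_lie_left_eq_neg (hQinv : ∀ w u v : 𝔤, Q ⁅w, u⁆ v + Q u ⁅w, v⁆ = 0) (u z y : 𝔤) :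
    Q ⁅u, z⁆ y = -Q u ⁅y, z⁆ := by
  rw [← lie_skew u z, ← lie_skew y z]
  simp only [map_neg, LinearMap.neg_apply]
  linarith [hQinv z u y]

theorem bilin_lie_proj_left (hQinv : ∀ w u v : 𝔤, Q ⁅w, u⁆ v + Q u ⁅w, v⁆ = 0)
    {p : 𝔤 →ₗ[ℝ] 𝔤} (hp : ∀ a b, Q (p a) b = Q (p a) (p b)) (w z y : 𝔤) :
    Q ⁅p w, z⁆ y = -Q (p w) (p ⁅y, z⁆) := by
  rw [bilin_lie_left_eq_neg hQinv, hp]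

theorem bilin_proj𝔪_left_of_mem (hsum : ∀ x, p𝔥 x + p𝔪 x = x) (hmem𝔥 : ∀ x, p𝔥 x ∈ 𝔥)
    (hQ𝔥𝔪 : ∀ x ∈ 𝔥, ∀ y ∈ 𝔪, Q x y = 0) (w : 𝔤) {y : 𝔤} (hy : y ∈ 𝔪) :
    Q (p𝔪 w) y = Q w y := by
  conv_rhs => rw [← hsum w]
  rw [map_add, LinearMap.add_apply, hQ𝔥𝔪 _ (hmem𝔥 w) _ hy, zero_add]

theorem bilin_proj𝔪_right_eq (hsum : ∀ x, p𝔥 x + p𝔪 x = x) (hmem𝔥 : ∀ x, p𝔥 x ∈ 𝔥)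
    (hmem𝔪 : ∀ x, p𝔪 x ∈ 𝔪) (hQsymm : ∀ x y, Q x y = Q y x)
    (hQ𝔥𝔪 : ∀ x ∈ 𝔥, ∀ y ∈ 𝔪, Q x y = 0) (a b : 𝔤) :
    Q (p𝔪 a) b = Q (p𝔪 a) (p𝔪 b) := by
  conv_lhs => rw [← hsum b]
  rw [map_add, hQsymm _ (p𝔥 b), hQ𝔥𝔪 _ (hmem𝔥 b) _ (hmem𝔪 a), zero_add]

theorem bilin_proj𝔥_right_eq (hsum : ∀ x, p𝔥 x + p𝔪 x = x) (hmem𝔥 : ∀ x, p𝔥 x ∈ 𝔥)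
    (hmem𝔪 : ∀ x, p𝔪 x ∈ 𝔪) (hQ𝔥𝔪 : ∀ x ∈ 𝔥, ∀ y ∈ 𝔪, Q x y = 0) (a b : 𝔤) :
    Q (p𝔥 a) b = Q (p𝔥 a) (p𝔥 b) := by
  conv_lhs => rw [← hsum b]
  rw [map_add, hQ𝔥𝔪 _ (hmem𝔥 a) _ (hmem𝔪 b), add_zero]

theorem bilin_curvRt_self_left (hsum : ∀ x, p𝔥 x + p𝔪 x = x) (hmem𝔥 : ∀ x, p𝔥 x ∈ 𝔥)
    (hmem𝔪 : ∀ x, p𝔪 x ∈ 𝔪) (hQsymm : ∀ x y, Q x y = Q y x)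
    (hQinv : ∀ w u v : 𝔤, Q ⁅w, u⁆ v + Q u ⁅w, v⁆ = 0)
    (hQ𝔥𝔪 : ∀ x ∈ 𝔥, ∀ y ∈ 𝔪, Q x y = 0) (t : ℝ) (x z : 𝔤) {y : 𝔤} (hy : y ∈ 𝔪) :
    Q (curvRt p𝔥 p𝔪 t x z z) y =
      (t - t ^ 2) * Q (p𝔪 ⁅x, z⁆) (p𝔪 ⁅y, z⁆) + Q (p𝔥 ⁅x, z⁆) (p𝔥 ⁅y, z⁆) := by
  have h𝔪 := bilin_lie_proj_left hQinv (bilin_proj𝔪_right_eq hsum hmem𝔥 hmem𝔪 hQsymm hQ𝔥𝔪)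
  have h𝔥 := bilin_lie_proj_left hQinv (bilin_proj𝔥_right_eq hsum hmem𝔥 hmem𝔪 hQ𝔥𝔪)
  rw [curvRt_self, map_sub, LinearMap.sub_apply, map_smul, LinearMap.smul_apply, smul_eq_mul,
    bilin_proj𝔪_left_of_mem hsum hmem𝔥 hQ𝔥𝔪 _ hy, h𝔪, h𝔥]
  ring

end ReductiveDecomposition

theorem stmt3_general
    {𝔤 : Type*} [LieRing 𝔤] [LieAlgebra ℝ 𝔤]
    (𝔥 𝔪 : Submodule ℝ 𝔤)
    (p𝔥 p𝔪 : 𝔤 →ₗ[ℝ] 𝔤)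
    (hsum : ∀ x, p𝔥 x + p𝔪 x = x)
    (hmem𝔥 : ∀ x, p𝔥 x ∈ 𝔥) (hmem𝔪 : ∀ x, p𝔪 x ∈ 𝔪)
    (Q : LinearMap.BilinForm ℝ 𝔤)
    (hQsymm : ∀ x y, Q x y = Q y x)
    (hQinv : ∀ w u v : 𝔤, Q ⁅w, u⁆ v + Q u ⁅w, v⁆ = 0)
    (hQ𝔥𝔪 : ∀ x ∈ 𝔥, ∀ y ∈ 𝔪, Q x y = 0)
    {n : ℕ} (Z : Fin n → 𝔤) (hZ𝔪 : ∀ i, Z i ∈ 𝔪)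
    (t : ℝ) :
    (∀ x ∈ 𝔪, ∀ y ∈ 𝔪,
      ∑ i, Q (curvRt p𝔥 p𝔪 t x (Z i) (Z i)) y =
        ∑ i, ((t - t ^ 2) * Q (p𝔪 ⁅x, Z i⁆) (p𝔪 ⁅y, Z i⁆)
          + Q (p𝔥 ⁅x, Z i⁆) (p𝔥 ⁅y, Z i⁆))) ∧
    (∑ j, ∑ i, Q (curvRt p𝔥 p𝔪 t (Z j) (Z i) (Z i)) (Z j) =
      ∑ i, ∑ j, ((t - t ^ 2) * Q (p𝔪 ⁅Z i, Z j⁆) (p𝔪 ⁅Z i, Z j⁆)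
        + Q (p𝔥 ⁅Z i, Z j⁆) (p𝔥 ⁅Z i, Z j⁆))) := by
  have ric := bilin_curvRt_self_left hsum hmem𝔥 hmem𝔪 hQsymm hQinv hQ𝔥𝔪 t
  refine ⟨fun x _ y hy => Finset.sum_congr rfl fun i _ => ric x (Z i) hy, ?_⟩
  exact Finset.sum_congr rfl fun j _ => Finset.sum_congr rfl fun i _ => ric (Z j) (Z i) (hZ𝔪 j)

/-- `Ric^t(X,Y) = Σ_i [(t−t²)⟨[X,Z_i]_𝔪,[Y,Z_i]_𝔪⟩ + Q_𝔥([X,Z_i]_𝔥,[Y,Z_i]_𝔥)]`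
and `Scal^t = Σ_{i,j} [(t−t²)⟨[Z_i,Z_j]_𝔪,[Z_i,Z_j]_𝔪⟩ + Q_𝔥([Z_i,Z_j]_𝔥,[Z_i,Z_j]_𝔥)]`. -/
theorem stmt3
    {𝔤 : Type*} [LieRing 𝔤] [LieAlgebra ℝ 𝔤] [FiniteDimensional ℝ 𝔤]
    (𝔥 𝔪 : Submodule ℝ 𝔤)
    (p𝔥 p𝔪 : 𝔤 →ₗ[ℝ] 𝔤)
    (hsum : ∀ x, p𝔥 x + p𝔪 x = x)
    (hmem𝔥 : ∀ x, p𝔥 x ∈ 𝔥) (hmem𝔪 : ∀ x, p𝔪 x ∈ 𝔪)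
    (hid𝔥 : ∀ x ∈ 𝔥, p𝔥 x = x) (hid𝔪 : ∀ x ∈ 𝔪, p𝔪 x = x)
    (hsub : ∀ x ∈ 𝔥, ∀ y ∈ 𝔥, ⁅x, y⁆ ∈ 𝔥)
    (hhm : ∀ x ∈ 𝔥, ∀ y ∈ 𝔪, ⁅x, y⁆ ∈ 𝔪)
    (Q : LinearMap.BilinForm ℝ 𝔤)
    (hQsymm : ∀ x y, Q x y = Q y x)
    (hQinv : ∀ w u v : 𝔤, Q ⁅w, u⁆ v + Q u ⁅w, v⁆ = 0)
    (hQ𝔥𝔪 : ∀ x ∈ 𝔥, ∀ y ∈ 𝔪, Q x y = 0)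
    (hQpos𝔪 : ∀ x ∈ 𝔪, x ≠ 0 → 0 < Q x x)
    (hQ𝔥nd : ∀ x ∈ 𝔥, (∀ y ∈ 𝔥, Q x y = 0) → x = 0)
    {n : ℕ} (Z : Fin n → 𝔤) (hZ𝔪 : ∀ i, Z i ∈ 𝔪)
    (hZon : ∀ i j, Q (Z i) (Z j) = if i = j then 1 else 0)
    (hZspan : Submodule.span ℝ (Set.range Z) = 𝔪)
    (t : ℝ) :
    (∀ x ∈ 𝔪, ∀ y ∈ 𝔪,
      ∑ i, Q (curvRt p𝔥 p𝔪 t x (Z i) (Z i)) y =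
        ∑ i, ((t - t ^ 2) * Q (p𝔪 ⁅x, Z i⁆) (p𝔪 ⁅y, Z i⁆)
          + Q (p𝔥 ⁅x, Z i⁆) (p𝔥 ⁅y, Z i⁆))) ∧
    (∑ j, ∑ i, Q (curvRt p𝔥 p𝔪 t (Z j) (Z i) (Z i)) (Z j) =
      ∑ i, ∑ j, ((t - t ^ 2) * Q (p𝔪 ⁅Z i, Z j⁆) (p𝔪 ⁅Z i, Z j⁆)
        + Q (p𝔥 ⁅Z i, Z j⁆) (p𝔥 ⁅Z i, Z j⁆))) :=
  stmt3_general 𝔥 𝔪 p𝔥 p𝔪 hsum hmem𝔥 hmem𝔪 Q hQsymm hQinv hQ𝔥𝔪 Z hZ𝔪 t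
end

section
/- Define the 4-linear form dT^t(X₀,X₁,X₂,X₃) := Σ_{i=0}^{3} (−1)^i (∇^t_{X_i} T^t)(X₀,…,X̂_i,…,X₃) − Σ_{0≤i<j≤3} (−1)^{i+j} T^t(T^t(X_i,X_j), X₀,…,X̂_i,…,X̂_j,…,X₃), where T^t(X,Y,Z) := ⟨T^t(X,Y),Z⟩ and (∇^t_W T^t)(X,Y,V) := ⟨Λ^t(W)(T^t(X,Y)) − T^t(Λ^t(W)X,Y) − T^t(X,Λ^t(W)Y), V⟩. If ⟨·,·⟩ is naturally reductive (⟨[X,Y]_𝔪,Z⟩ + ⟨Y,[X,Z]_𝔪⟩ = 0 for all X,Y,Z ∈ 𝔪), then dT^t(X,Y,Z,V) = 2(2t−1)·⟨Jac_𝔪(X,Y,Z), V⟩ for all X,Y,Z,V ∈ 𝔪. -/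
/-- The torsion `T^t(X,Y) = (2t−1)[X,Y]_𝔪` of the connection `Λ^t(X)Y = t[X,Y]_𝔪`. -/
noncomputable def torTt {𝔤 : Type*} [LieRing 𝔤] [LieAlgebra ℝ 𝔤]
    (p𝔪 : 𝔤 →ₗ[ℝ] 𝔤) (t : ℝ) (x y : 𝔤) : 𝔤 :=
  (2 * t - 1) • p𝔪 ⁅x, y⁆

/-- The algebraic covariant derivative
`(∇^t_W T^t)(X,Y) = Λ^t(W)(T^t(X,Y)) − T^t(Λ^t(W)X,Y) − T^t(X,Λ^t(W)Y)`. -/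
noncomputable def nablaTt {𝔤 : Type*} [LieRing 𝔤] [LieAlgebra ℝ 𝔤]
    (p𝔪 : 𝔤 →ₗ[ℝ] 𝔤) (t : ℝ) (w x y : 𝔤) : 𝔤 :=
  t • p𝔪 ⁅w, torTt p𝔪 t x y⁆ - torTt p𝔪 t (t • p𝔪 ⁅w, x⁆) y
    - torTt p𝔪 t x (t • p𝔪 ⁅w, y⁆)

/-- `Jac_𝔪(X,Y,Z) = [X,[Y,Z]_𝔪]_𝔪 + [Y,[Z,X]_𝔪]_𝔪 + [Z,[X,Y]_𝔪]_𝔪`. -/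
noncomputable def jacM {𝔤 : Type*} [LieRing 𝔤] [LieAlgebra ℝ 𝔤]
    (p𝔪 : 𝔤 →ₗ[ℝ] 𝔤) (x y z : 𝔤) : 𝔤 :=
  p𝔪 ⁅x, p𝔪 ⁅y, z⁆⁆ + p𝔪 ⁅y, p𝔪 ⁅z, x⁆⁆ + p𝔪 ⁅z, p𝔪 ⁅x, y⁆⁆

/-- The exterior derivative of the torsion 3-form, computed in terms of the connection
`∇^t` with torsion, evaluated on `(X₀,X₁,X₂,X₃)`:
`dT(X₀,…,X₃) = Σᵢ (−1)ⁱ (∇_{Xᵢ}T)(…,X̂ᵢ,…) − Σ_{i<j} (−1)^{i+j} T(T(Xᵢ,Xⱼ),…,X̂ᵢ,…,X̂ⱼ,…)`. -/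
noncomputable def dTt {𝔤 : Type*} [LieRing 𝔤] [LieAlgebra ℝ 𝔤]
    (p𝔪 : 𝔤 →ₗ[ℝ] 𝔤) (B : LinearMap.BilinForm ℝ 𝔤) (t : ℝ) (x₀ x₁ x₂ x₃ : 𝔤) : ℝ :=
  B (nablaTt p𝔪 t x₀ x₁ x₂) x₃ - B (nablaTt p𝔪 t x₁ x₀ x₂) x₃
    + B (nablaTt p𝔪 t x₂ x₀ x₁) x₃ - B (nablaTt p𝔪 t x₃ x₀ x₁) x₂
    + B (torTt p𝔪 t (torTt p𝔪 t x₀ x₁) x₂) x₃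
    - B (torTt p𝔪 t (torTt p𝔪 t x₀ x₂) x₁) x₃
    + B (torTt p𝔪 t (torTt p𝔪 t x₀ x₃) x₁) x₂
    + B (torTt p𝔪 t (torTt p𝔪 t x₁ x₂) x₀) x₃
    - B (torTt p𝔪 t (torTt p𝔪 t x₁ x₃) x₀) x₂
    + B (torTt p𝔪 t (torTt p𝔪 t x₂ x₃) x₀) x₁


/-!
Write `[X,Y]` for `[X,Y]_𝔪` and `s = 2t - 1`. Since the connection is a multiple of the
bracket, `∇^t_W T^t` is `t s Jac_𝔪(W, ·, ·)` by pure algebra. Natural reductivity makes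
`⟨Jac_𝔪(X,Y,Z),V⟩` a 4-form, so the four covariant-derivative terms add up to
`4ts ⟨Jac_𝔪(X,Y,Z),V⟩`, and it turns each `⟨T(T(Xᵢ,Xⱼ),Xₖ),Xₗ⟩` into `s² ⟨[Xᵢ,Xⱼ],[Xₖ,Xₗ]⟩`,
whose six terms add up to `-2s² ⟨Jac_𝔪(X,Y,Z),V⟩`. Finally `4ts - 2s² = 2s`.
-/

section Algebraic

variable {𝔤 : Type*} [LieRing 𝔤] [LieAlgebra ℝ 𝔤] (p𝔪 : 𝔤 →ₗ[ℝ] 𝔤)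

theorem jacM_cycle (x y z : 𝔤) : jacM p𝔪 z x y = jacM p𝔪 x y z := by
  unfold jacM
  abel

theorem jacM_swap (x y z : 𝔤) : jacM p𝔪 y x z = -jacM p𝔪 x y z := by
  unfold jacM
  rw [← lie_skew x z, ← lie_skew z y, ← lie_skew y x]
  simp only [map_neg, lie_neg]
  abel

theorem nablaTt_eq_smul_jacM (t : ℝ) (w x y : 𝔤) :
    nablaTt p𝔪 t w x y = (t * (2 * t - 1)) • jacM p𝔪 w x y := by
  unfold nablaTt torTt jacM
  rw [← lie_skew (t • p𝔪 ⁅w, x⁆) y, ← lie_skew w y]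
  simp only [lie_smul, lie_neg, map_smul, map_neg, smul_neg]
  module

end Algebraic

section NaturallyReductive

variable {𝔤 : Type*} [LieRing 𝔤] [LieAlgebra ℝ 𝔤] {𝔪 : Submodule ℝ 𝔤} {p𝔪 : 𝔤 →ₗ[ℝ] 𝔤}
  {B : LinearMap.BilinForm ℝ 𝔤}

theorem inner_jacM_eq (hmem𝔪 : ∀ x, p𝔪 x ∈ 𝔪) (hBsymm : ∀ x ∈ 𝔪, ∀ y ∈ 𝔪, B x y = B y x)
    (hnat : ∀ x ∈ 𝔪, ∀ y ∈ 𝔪, ∀ z ∈ 𝔪, B (p𝔪 ⁅x, y⁆) z + B y (p𝔪 ⁅x, z⁆) = 0)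
    {a b c d : 𝔤} (ha : a ∈ 𝔪) (hb : b ∈ 𝔪) (hc : c ∈ 𝔪) (hd : d ∈ 𝔪) :
    B (jacM p𝔪 a b c) d = -(B (p𝔪 ⁅a, b⁆) (p𝔪 ⁅c, d⁆) - B (p𝔪 ⁅a, c⁆) (p𝔪 ⁅b, d⁆)
      + B (p𝔪 ⁅a, d⁆) (p𝔪 ⁅b, c⁆)) := by
  have hca : p𝔪 ⁅c, a⁆ = -p𝔪 ⁅a, c⁆ := by rw [← lie_skew, map_neg]
  have h₁ := hnat a ha _ (hmem𝔪 ⁅b, c⁆) d hd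
  have h₂ := hnat b hb _ (hmem𝔪 ⁅c, a⁆) d hd
  have h₃ := hnat c hc _ (hmem𝔪 ⁅a, b⁆) d hd
  simp only [hca, lie_neg, map_neg, LinearMap.neg_apply] at h₂
  rw [hBsymm _ (hmem𝔪 ⁅b, c⁆) _ (hmem𝔪 ⁅a, d⁆)] at h₁
  simp only [jacM, map_add, LinearMap.add_apply, hca, lie_neg, map_neg, LinearMap.neg_apply]
  linear_combination h₁ + h₂ + h₃

theorem inner_jacM_swap_last (hmem𝔪 : ∀ x, p𝔪 x ∈ 𝔪)
    (hBsymm : ∀ x ∈ 𝔪, ∀ y ∈ 𝔪, B x y = B y x)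
    (hnat : ∀ x ∈ 𝔪, ∀ y ∈ 𝔪, ∀ z ∈ 𝔪, B (p𝔪 ⁅x, y⁆) z + B y (p𝔪 ⁅x, z⁆) = 0)
    {a b c d : 𝔤} (ha : a ∈ 𝔪) (hb : b ∈ 𝔪) (hc : c ∈ 𝔪) (hd : d ∈ 𝔪) :
    B (jacM p𝔪 a b c) d = -B (jacM p𝔪 a b d) c := by
  rw [inner_jacM_eq hmem𝔪 hBsymm hnat ha hb hc hd, inner_jacM_eq hmem𝔪 hBsymm hnat ha hb hd hc,
    ← lie_skew c d, map_neg, map_neg,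
    hBsymm _ (hmem𝔪 ⁅a, c⁆) _ (hmem𝔪 ⁅b, d⁆), hBsymm _ (hmem𝔪 ⁅a, d⁆) _ (hmem𝔪 ⁅b, c⁆)]
  ring

theorem inner_torTt_torTt (hmem𝔪 : ∀ x, p𝔪 x ∈ 𝔪)
    (hnat : ∀ x ∈ 𝔪, ∀ y ∈ 𝔪, ∀ z ∈ 𝔪, B (p𝔪 ⁅x, y⁆) z + B y (p𝔪 ⁅x, z⁆) = 0)
    (t : ℝ) (a b : 𝔤) {c d : 𝔤} (hc : c ∈ 𝔪) (hd : d ∈ 𝔪) :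
    B (torTt p𝔪 t (torTt p𝔪 t a b) c) d = (2 * t - 1) ^ 2 * B (p𝔪 ⁅a, b⁆) (p𝔪 ⁅c, d⁆) := by
  have h := hnat c hc _ (hmem𝔪 ⁅a, b⁆) d hd
  unfold torTt
  rw [← lie_skew]
  simp only [lie_smul, map_smul, map_neg, LinearMap.smul_apply, LinearMap.neg_apply, smul_eq_mul]
  linear_combination (-(2 * t - 1) ^ 2) * h

end NaturallyReductive

theorem stmt6_general
    {𝔤 : Type*} [LieRing 𝔤] [LieAlgebra ℝ 𝔤]
    (𝔪 : Submodule ℝ 𝔤)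
    (p𝔪 : 𝔤 →ₗ[ℝ] 𝔤)
    (hmem𝔪 : ∀ x, p𝔪 x ∈ 𝔪)
    (B : LinearMap.BilinForm ℝ 𝔤)
    (hBsymm : ∀ x ∈ 𝔪, ∀ y ∈ 𝔪, B x y = B y x)
    (hnat : ∀ x ∈ 𝔪, ∀ y ∈ 𝔪, ∀ z ∈ 𝔪, B (p𝔪 ⁅x, y⁆) z + B y (p𝔪 ⁅x, z⁆) = 0)
    (t : ℝ) :
    ∀ x ∈ 𝔪, ∀ y ∈ 𝔪, ∀ z ∈ 𝔪, ∀ v ∈ 𝔪,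
      dTt p𝔪 B t x y z v = (2 * (2 * t - 1)) * B (jacM p𝔪 x y z) v := by
  intro x hx y hy z hz v hv
  have hTT := inner_torTt_torTt hmem𝔪 hnat t
  have hJ := inner_jacM_eq hmem𝔪 hBsymm hnat hx hy hz hv
  simp only [dTt, nablaTt_eq_smul_jacM, jacM_swap p𝔪 x y, jacM_cycle p𝔪 x y z,
    jacM_cycle p𝔪 x y v, map_smul, map_neg, LinearMap.smul_apply, LinearMap.neg_apply,
    smul_eq_mul, hTT _ _ hx hv, hTT _ _ hx hz, hTT _ _ hy hv, hTT _ _ hy hz, hTT _ _ hz hv,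
    hTT _ _ hx hy, inner_jacM_swap_last hmem𝔪 hBsymm hnat hx hy hv hz]
  rw [hBsymm _ (hmem𝔪 ⁅y, z⁆) _ (hmem𝔪 ⁅x, v⁆), hBsymm _ (hmem𝔪 ⁅y, v⁆) _ (hmem𝔪 ⁅x, z⁆),
    hBsymm _ (hmem𝔪 ⁅z, v⁆) _ (hmem𝔪 ⁅x, y⁆)]
  linear_combination (2 * (2 * t - 1) ^ 2) * hJ

/-- On a naturally reductive space,
`dT^t(X,Y,Z,V) = 2(2t−1)·⟨Jac_𝔪(X,Y,Z), V⟩` for all `X,Y,Z,V ∈ 𝔪`. -/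
theorem stmt6
    {𝔤 : Type*} [LieRing 𝔤] [LieAlgebra ℝ 𝔤] [FiniteDimensional ℝ 𝔤]
    (𝔥 𝔪 : Submodule ℝ 𝔤)
    (p𝔥 p𝔪 : 𝔤 →ₗ[ℝ] 𝔤)
    (hsum : ∀ x, p𝔥 x + p𝔪 x = x)
    (hmem𝔥 : ∀ x, p𝔥 x ∈ 𝔥) (hmem𝔪 : ∀ x, p𝔪 x ∈ 𝔪)
    (hid𝔥 : ∀ x ∈ 𝔥, p𝔥 x = x) (hid𝔪 : ∀ x ∈ 𝔪, p𝔪 x = x)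
    (hsub : ∀ x ∈ 𝔥, ∀ y ∈ 𝔥, ⁅x, y⁆ ∈ 𝔥)
    (hhm : ∀ x ∈ 𝔥, ∀ y ∈ 𝔪, ⁅x, y⁆ ∈ 𝔪)
    (B : LinearMap.BilinForm ℝ 𝔤)
    (hBsymm : ∀ x ∈ 𝔪, ∀ y ∈ 𝔪, B x y = B y x)
    (hBpos : ∀ x ∈ 𝔪, x ≠ 0 → 0 < B x x)
    (hnat : ∀ x ∈ 𝔪, ∀ y ∈ 𝔪, ∀ z ∈ 𝔪, B (p𝔪 ⁅x, y⁆) z + B y (p𝔪 ⁅x, z⁆) = 0)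
    (t : ℝ) :
    ∀ x ∈ 𝔪, ∀ y ∈ 𝔪, ∀ z ∈ 𝔪, ∀ v ∈ 𝔪,
      dTt p𝔪 B t x y z v = (2 * (2 * t - 1)) * B (jacM p𝔪 x y z) v :=
  stmt6_general 𝔪 p𝔪 hmem𝔪 B hBsymm hnat t
end

section
/- Assume Q is nondegenerate on 𝔤. Let A_1,…,A_N and B_1,…,B_N be bases of 𝔤 dual with respect to Q, and X_1,…,X_m, Y_1,…,Y_m bases of 𝔥 dual with respect to Q_𝔥. Set C_𝔤 := −Σ_s ad(A_s) ∘ ad(B_s) and C_𝔥 := −Σ_r ad(X_r) ∘ ad(Y_r), both endomorphisms of 𝔤 (C_𝔥 preserves 𝔥). Then Σ_{i,j} Q_𝔥([Z_i,Z_j]_𝔥,[Z_i,Z_j]_𝔥) + (1/3) Σ_{i,j} ⟨[Z_i,Z_j]_𝔪,[Z_i,Z_j]_𝔪⟩ = (1/3) ( tr_𝔤(C_𝔤) − tr(C_𝔥|_𝔥) ). -/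
open scoped BigOperators
open LinearMap TensorProduct

lemma stmt14_null_span {𝔤 : Type*} [AddCommGroup 𝔤] [Module ℝ 𝔤]
    (Q : LinearMap.BilinForm ℝ 𝔤) (w : 𝔤) (s : Set 𝔤) (h : ∀ y ∈ s, Q w y = 0) :
    ∀ y ∈ Submodule.span ℝ s, Q w y = 0 := by
  intro y hy
  have hle : Submodule.span ℝ s ≤ LinearMap.ker (Q w) :=
    Submodule.span_le.mpr fun x hx => LinearMap.mem_ker.mpr (h x hx)
  exact hle hy

lemma stmt14_pair_zero {𝔤 : Type*} [AddCommGroup 𝔤] [Module ℝ 𝔤]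
    (Q : LinearMap.BilinForm ℝ 𝔤) {ι : Type*} [Fintype ι] [DecidableEq ι] (b d : ι → 𝔤)
    (hdual : ∀ k l, Q (b k) (d l) = if k = l then (1:ℝ) else 0)
    (v : 𝔤) (l : ι) : Q (v - ∑ k, Q v (d k) • b k) (d l) = 0 := by
  simp [map_sub, map_sum, map_smul, LinearMap.sub_apply, LinearMap.sum_apply,
    LinearMap.smul_apply, hdual, smul_eq_mul, Finset.sum_ite_eq', mul_comm]

lemma stmt14_trace_eq_sum_dual {𝔤 : Type*} [AddCommGroup 𝔤] [Module ℝ 𝔤] [FiniteDimensional ℝ 𝔤]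
    (Q : LinearMap.BilinForm ℝ 𝔤) {ι : Type*} [Fintype ι] (b d : ι → 𝔤)
    (hexp : ∀ v : 𝔤, ∑ k, Q v (d k) • b k = v) (L : 𝔤 →ₗ[ℝ] 𝔤) :
    LinearMap.trace ℝ 𝔤 L = ∑ k, Q (L (b k)) (d k) := by
  have hL : L = ∑ k, dualTensorHom ℝ 𝔤 𝔤 ((Q.flip (d k)) ⊗ₜ[ℝ] (L (b k))) := by
    ext v
    simp only [LinearMap.sum_apply, dualTensorHom_apply, LinearMap.flip_apply]
    conv_lhs => rw [← hexp v]
    rw [map_sum]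
    simp [map_smul]
  conv_lhs => rw [hL, map_sum]
  refine Finset.sum_congr rfl fun k _ => ?_
  rw [LinearMap.trace_eq_contract_apply, contractLeft_apply]; rfl

lemma stmt14_swap_dual {𝔤 : Type*} [AddCommGroup 𝔤] [Module ℝ 𝔤] {ι κ : Type*} [Fintype ι] [Fintype κ]
    (T : 𝔤 →ₗ[ℝ] 𝔤 →ₗ[ℝ] ℝ) (A B : ι → 𝔤) (b d : κ → 𝔤) (c : ι → κ → ℝ)
    (hB : ∀ s, (∑ l, c s l • d l) = B s) (hb : ∀ l, (∑ s, c s l • A s) = b l) :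
    ∑ s, T (A s) (B s) = ∑ l, T (b l) (d l) := by
  calc ∑ s, T (A s) (B s) = ∑ s, ∑ l, c s l * T (A s) (d l) := by
        refine Finset.sum_congr rfl fun s _ => ?_
        rw [← hB s, map_sum]
        simp [map_smul, smul_eq_mul]
    _ = ∑ l, ∑ s, c s l * T (A s) (d l) := Finset.sum_comm
    _ = ∑ l, T (b l) (d l) := by
        refine Finset.sum_congr rfl fun l _ => ?_
        rw [← hb l, map_sum]
        simp [LinearMap.sum_apply, map_smul, LinearMap.smul_apply, smul_eq_mul]

/-- With dual bases `A_s, B_s` of `𝔤` (w.r.t. the nondegenerate `Q`)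
and `X_r, Y_r` of `𝔥` (w.r.t. `Q_𝔥`), and the Casimir operators
`C_𝔤 = −Σ_s ad(A_s)∘ad(B_s)` and `C_𝔥 = −Σ_r ad(X_r)∘ad(Y_r)`:
`Σ_{i,j} Q_𝔥([Z_i,Z_j]_𝔥,[Z_i,Z_j]_𝔥) + (1/3) Σ_{i,j} ⟨[Z_i,Z_j]_𝔪,[Z_i,Z_j]_𝔪⟩
  = (1/3)(tr_𝔤(C_𝔤) − tr(C_𝔥|_𝔥))`,
the trace of `C_𝔥` on `𝔥` being computed by the dual bases as `Σ_r Q(C_𝔥 X_r, Y_r)`. -/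
theorem stmt14
    {𝔤 : Type*} [LieRing 𝔤] [LieAlgebra ℝ 𝔤] [FiniteDimensional ℝ 𝔤]
    (𝔥 𝔪 : Submodule ℝ 𝔤)
    (p𝔥 p𝔪 : 𝔤 →ₗ[ℝ] 𝔤)
    (hsum : ∀ x, p𝔥 x + p𝔪 x = x)
    (hmem𝔥 : ∀ x, p𝔥 x ∈ 𝔥) (hmem𝔪 : ∀ x, p𝔪 x ∈ 𝔪)
    (hid𝔥 : ∀ x ∈ 𝔥, p𝔥 x = x) (hid𝔪 : ∀ x ∈ 𝔪, p𝔪 x = x)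
    (hsub : ∀ x ∈ 𝔥, ∀ y ∈ 𝔥, ⁅x, y⁆ ∈ 𝔥)
    (hhm : ∀ x ∈ 𝔥, ∀ y ∈ 𝔪, ⁅x, y⁆ ∈ 𝔪)
    (Q : LinearMap.BilinForm ℝ 𝔤)
    (hQsymm : ∀ x y, Q x y = Q y x)
    (hQinv : ∀ w u v : 𝔤, Q ⁅w, u⁆ v + Q u ⁅w, v⁆ = 0)
    (hQ𝔥𝔪 : ∀ x ∈ 𝔥, ∀ y ∈ 𝔪, Q x y = 0)
    (hQpos𝔪 : ∀ x ∈ 𝔪, x ≠ 0 → 0 < Q x x)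
    (hQ𝔥nd : ∀ x ∈ 𝔥, (∀ y ∈ 𝔥, Q x y = 0) → x = 0)
    (hQnd : ∀ x : 𝔤, (∀ y : 𝔤, Q x y = 0) → x = 0)
    {n : ℕ} (Z : Fin n → 𝔤) (hZ𝔪 : ∀ i, Z i ∈ 𝔪)
    (hZon : ∀ i j, Q (Z i) (Z j) = if i = j then 1 else 0)
    (hZspan : Submodule.span ℝ (Set.range Z) = 𝔪)
    {N : ℕ} (A B : Fin N → 𝔤)
    (hABdual : ∀ s s', Q (A s) (B s') = if s = s' then 1 else 0)
    (hAspan : Submodule.span ℝ (Set.range A) = ⊤)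
    (hBspan : Submodule.span ℝ (Set.range B) = ⊤)
    {m : ℕ} (X Y : Fin m → 𝔤)
    (hX𝔥 : ∀ r, X r ∈ 𝔥) (hY𝔥 : ∀ r, Y r ∈ 𝔥)
    (hXYdual : ∀ r s, Q (X r) (Y s) = if r = s then 1 else 0)
    (hXspan : Submodule.span ℝ (Set.range X) = 𝔥)
    (hYspan : Submodule.span ℝ (Set.range Y) = 𝔥) :
    ∑ i, ∑ j, Q (p𝔥 ⁅Z i, Z j⁆) (p𝔥 ⁅Z i, Z j⁆)
        + (1 / 3 : ℝ) * ∑ i, ∑ j, Q (p𝔪 ⁅Z i, Z j⁆) (p𝔪 ⁅Z i, Z j⁆) =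
      (1 / 3 : ℝ) *
        (LinearMap.trace ℝ 𝔤
            (-∑ s, (LieAlgebra.ad ℝ 𝔤 (A s)) ∘ₗ (LieAlgebra.ad ℝ 𝔤 (B s)))
          - ∑ r, Q (-∑ r', ⁅X r', ⁅Y r', X r⁆⁆) (Y r)) := by
  classical
  -- invariance consequences
  have hinv2 : ∀ w u v : 𝔤, Q ⁅w, u⁆ v = - Q u ⁅w, v⁆ := fun w u v => by
    linarith [hQinv w u v]
  have hcyc : ∀ a b c : 𝔤, Q ⁅a, b⁆ c = Q a ⁅b, c⁆ := by
    intro a b c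
    have hba : ⁅b, a⁆ = -⁅a, b⁆ := by rw [← lie_skew]
    have h := hQinv b a c
    rw [hba, map_neg, LinearMap.neg_apply] at h
    linarith
  -- sup is top
  have hsup : 𝔥 ⊔ 𝔪 = ⊤ := by
    rw [eq_top_iff]
    intro x _
    rw [← hsum x]
    exact Submodule.add_mem_sup (hmem𝔥 x) (hmem𝔪 x)
  -- mixed dual families
  set b' : Fin m ⊕ Fin n → 𝔤 := Sum.elim X Z with hb'def
  set d' : Fin m ⊕ Fin n → 𝔤 := Sum.elim Y Z with hd'def
  have hXZ : ∀ r i, Q (X r) (Z i) = 0 := fun r i => hQ𝔥𝔪 _ (hX𝔥 r) _ (hZ𝔪 i)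
  have hZY : ∀ i r, Q (Z i) (Y r) = 0 := fun i r => by
    rw [hQsymm]; exact hQ𝔥𝔪 _ (hY𝔥 r) _ (hZ𝔪 i)
  have hdual' : ∀ k l, Q (b' k) (d' l) = if k = l then (1:ℝ) else 0 := by
    rintro (r | i) (s | j) <;> simp [b', d', hXYdual, hZon, hXZ, hZY]
  have hdual'' : ∀ k l, Q (d' k) (b' l) = if k = l then (1:ℝ) else 0 := by
    intro k l
    rw [hQsymm, hdual' l k]
    simp [eq_comm]
  have hspan_d' : Submodule.span ℝ (Set.range d') = ⊤ := by
    rw [hd'def, Set.Sum.elim_range, Submodule.span_union, hYspan, hZspan, hsup]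
  have hspan_b' : Submodule.span ℝ (Set.range b') = ⊤ := by
    rw [hb'def, Set.Sum.elim_range, Submodule.span_union, hXspan, hZspan, hsup]
  -- expansions
  have Emixed : ∀ v : 𝔤, ∑ k, Q v (d' k) • b' k = v := by
    intro v
    have h1 := stmt14_pair_zero Q b' d' hdual' v
    have h2 : ∀ y : 𝔤, Q (v - ∑ k, Q v (d' k) • b' k) y = 0 := by
      intro y
      have h3 := stmt14_null_span Q _ (Set.range d') (by rintro y ⟨l, rfl⟩; exact h1 l)
      rw [hspan_d'] at h3
      exact h3 y Submodule.mem_top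
    have h3 := hQnd _ h2
    rw [sub_eq_zero] at h3
    exact h3.symm
  have EB : ∀ v : 𝔤, ∑ s, Q v (B s) • A s = v := by
    intro v
    have h1 := stmt14_pair_zero Q A B hABdual v
    have h2 : ∀ y : 𝔤, Q (v - ∑ s, Q v (B s) • A s) y = 0 := by
      intro y
      have h3 := stmt14_null_span Q _ (Set.range B) (by rintro y ⟨l, rfl⟩; exact h1 l)
      rw [hBspan] at h3
      exact h3 y Submodule.mem_top
    have h3 := hQnd _ h2
    rw [sub_eq_zero] at h3
    exact h3.symm
  have Edb : ∀ v : 𝔤, ∑ l, Q v (b' l) • d' l = v := by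
    intro v
    have h1 := stmt14_pair_zero Q d' b' hdual'' v
    have h2 : ∀ y : 𝔤, Q (v - ∑ l, Q v (b' l) • d' l) y = 0 := by
      intro y
      have h3 := stmt14_null_span Q _ (Set.range b') (by rintro y ⟨l, rfl⟩; exact h1 l)
      rw [hspan_b'] at h3
      exact h3 y Submodule.mem_top
    have h3 := hQnd _ h2
    rw [sub_eq_zero] at h3
    exact h3.symm
  have E𝔥 : ∀ v ∈ 𝔥, ∑ r, Q v (Y r) • X r = v := by
    intro v hv
    have h1 := stmt14_pair_zero Q X Y hXYdual v
    have hw : v - ∑ r, Q v (Y r) • X r ∈ 𝔥 :=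
      Submodule.sub_mem _ hv (Submodule.sum_mem _ fun r _ => Submodule.smul_mem _ _ (hX𝔥 r))
    have h2 : ∀ y ∈ 𝔥, Q (v - ∑ r, Q v (Y r) • X r) y = 0 := by
      intro y hy
      have h3 := stmt14_null_span Q _ (Set.range Y) (by rintro y ⟨l, rfl⟩; exact h1 l)
      rw [hYspan] at h3
      exact h3 y hy
    have h3 := hQ𝔥nd _ hw h2
    rw [sub_eq_zero] at h3
    exact h3.symm
  have E𝔪 : ∀ v ∈ 𝔪, ∑ j, Q v (Z j) • Z j = v := by
    intro v hv
    have h1 := stmt14_pair_zero Q Z Z hZon v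
    have hw : v - ∑ j, Q v (Z j) • Z j ∈ 𝔪 :=
      Submodule.sub_mem _ hv (Submodule.sum_mem _ fun j _ => Submodule.smul_mem _ _ (hZ𝔪 j))
    have h2 : ∀ y ∈ 𝔪, Q (v - ∑ j, Q v (Z j) • Z j) y = 0 := by
      intro y hy
      have h3 := stmt14_null_span Q _ (Set.range Z) (by rintro y ⟨l, rfl⟩; exact h1 l)
      rw [hZspan] at h3
      exact h3 y hy
    have h3 : v - ∑ j, Q v (Z j) • Z j = 0 := by
      by_contra hne
      have := hQpos𝔪 _ hw hne
      rw [h2 _ hw] at this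
      exact lt_irrefl 0 this
    rw [sub_eq_zero] at h3
    exact h3.symm
  -- trace formula via the mixed dual pair
  have htr : ∀ L : 𝔤 →ₗ[ℝ] 𝔤, LinearMap.trace ℝ 𝔤 L
      = ∑ r, Q (L (X r)) (Y r) + ∑ i, Q (L (Z i)) (Z i) := by
    intro L
    rw [stmt14_trace_eq_sum_dual Q b' d' Emixed L, Fintype.sum_sum_type]
    rfl
  have htrad : ∀ u v : 𝔤, LinearMap.trace ℝ 𝔤 ((LieAlgebra.ad ℝ 𝔤 u) ∘ₗ (LieAlgebra.ad ℝ 𝔤 v))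
      = ∑ r, Q ⁅u, ⁅v, X r⁆⁆ (Y r) + ∑ i, Q ⁅u, ⁅v, Z i⁆⁆ (Z i) := by
    intro u v
    rw [htr]
    simp [LieAlgebra.ad_apply]
  -- the bilinear "trace of ad∘ad" map
  set T : 𝔤 →ₗ[ℝ] 𝔤 →ₗ[ℝ] ℝ := LinearMap.mk₂ ℝ
    (fun u v => LinearMap.trace ℝ 𝔤 ((LieAlgebra.ad ℝ 𝔤 u) ∘ₗ (LieAlgebra.ad ℝ 𝔤 v)))
    (fun u u' v => by rw [map_add, LinearMap.add_comp, map_add])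
    (fun c u v => by rw [map_smul, LinearMap.smul_comp, map_smul])
    (fun u v v' => by rw [map_add, LinearMap.comp_add, map_add])
    (fun c u v => by rw [map_smul, LinearMap.comp_smul, map_smul]) with hTdef
  have hswap : ∑ s, LinearMap.trace ℝ 𝔤 ((LieAlgebra.ad ℝ 𝔤 (A s)) ∘ₗ (LieAlgebra.ad ℝ 𝔤 (B s)))
      = ∑ r, LinearMap.trace ℝ 𝔤 ((LieAlgebra.ad ℝ 𝔤 (X r)) ∘ₗ (LieAlgebra.ad ℝ 𝔤 (Y r)))
        + ∑ i, LinearMap.trace ℝ 𝔤 ((LieAlgebra.ad ℝ 𝔤 (Z i)) ∘ₗ (LieAlgebra.ad ℝ 𝔤 (Z i))) := by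
    have hb : ∀ l, (∑ s, Q (B s) (b' l) • A s) = b' l := by
      intro l
      rw [show (∑ s, Q (B s) (b' l) • A s) = ∑ s, Q (b' l) (B s) • A s from
        Finset.sum_congr rfl fun s _ => by rw [hQsymm]]
      exact EB (b' l)
    have h := stmt14_swap_dual T A B b' d' (fun s l => Q (B s) (b' l))
      (fun s => Edb (B s)) hb
    have hT : ∀ u v : 𝔤, T u v
        = LinearMap.trace ℝ 𝔤 ((LieAlgebra.ad ℝ 𝔤 u) ∘ₗ (LieAlgebra.ad ℝ 𝔤 v)) := by
      intro u v; rw [hTdef]; rfl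
    calc ∑ s, LinearMap.trace ℝ 𝔤 ((LieAlgebra.ad ℝ 𝔤 (A s)) ∘ₗ (LieAlgebra.ad ℝ 𝔤 (B s)))
        = ∑ s, T (A s) (B s) := Finset.sum_congr rfl fun s _ => (hT _ _).symm
      _ = ∑ l, T (b' l) (d' l) := h
      _ = _ := by
          rw [Fintype.sum_sum_type]
          exact congrArg₂ (· + ·)
            (Finset.sum_congr rfl fun r _ => hT _ _)
            (Finset.sum_congr rfl fun i _ => hT _ _)
  -- splitting Q on brackets of Z's
  have hsplit : ∀ i j : Fin n, Q ⁅Z i, Z j⁆ ⁅Z i, Z j⁆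
      = Q (p𝔥 ⁅Z i, Z j⁆) (p𝔥 ⁅Z i, Z j⁆) + Q (p𝔪 ⁅Z i, Z j⁆) (p𝔪 ⁅Z i, Z j⁆) := by
    intro i j
    have hcross1 : Q (p𝔥 ⁅Z i, Z j⁆) (p𝔪 ⁅Z i, Z j⁆) = 0 := hQ𝔥𝔪 _ (hmem𝔥 _) _ (hmem𝔪 _)
    have hcross2 : Q (p𝔪 ⁅Z i, Z j⁆) (p𝔥 ⁅Z i, Z j⁆) = 0 := by
      rw [hQsymm]; exact hcross1
    conv_lhs => rw [← hsum ⁅Z i, Z j⁆]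
    simp only [map_add, LinearMap.add_apply, hcross1, hcross2]
    ring
  have hstep2 : ∀ u ∈ 𝔥, ∀ i j : Fin n, Q ⁅u, Z i⁆ (Z j) = Q u (p𝔥 ⁅Z i, Z j⁆) := by
    intro u hu i j
    rw [hcyc]
    conv_lhs => rw [← hsum ⁅Z i, Z j⁆]
    rw [map_add, hQ𝔥𝔪 u hu _ (hmem𝔪 _), add_zero]
  have hinner : ∀ u ∈ 𝔥, ∑ r, Q (Y r) u * Q (X r) u = Q u u := by
    intro u hu
    have h0 : Q u u = Q (∑ r, Q u (Y r) • X r) u := by rw [E𝔥 u hu]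
    rw [h0, map_sum, LinearMap.sum_apply]
    refine Finset.sum_congr rfl fun r _ => ?_
    rw [map_smul, LinearMap.smul_apply, smul_eq_mul, hQsymm u (Y r)]
  have h1 : ∀ (r : Fin m) (i : Fin n), Q ⁅X r, Z i⁆ ⁅Y r, Z i⁆
      = ∑ j, Q ⁅Y r, Z i⁆ (Z j) * Q ⁅X r, Z i⁆ (Z j) := by
    intro r i
    conv_lhs => rw [← E𝔪 ⁅Y r, Z i⁆ (hhm _ (hY𝔥 r) _ (hZ𝔪 i))]
    rw [map_sum]
    refine Finset.sum_congr rfl fun j _ => ?_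
    rw [map_smul, smul_eq_mul]
  have hS : (∑ r, ∑ i, Q ⁅X r, Z i⁆ ⁅Y r, Z i⁆)
      = ∑ i, ∑ j, Q (p𝔥 ⁅Z i, Z j⁆) (p𝔥 ⁅Z i, Z j⁆) := by
    calc (∑ r, ∑ i, Q ⁅X r, Z i⁆ ⁅Y r, Z i⁆)
        = ∑ r, ∑ i, ∑ j, Q (Y r) (p𝔥 ⁅Z i, Z j⁆) * Q (X r) (p𝔥 ⁅Z i, Z j⁆) := by
          refine Finset.sum_congr rfl fun r _ => Finset.sum_congr rfl fun i _ => ?_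
          rw [h1 r i]
          refine Finset.sum_congr rfl fun j _ => ?_
          rw [hstep2 _ (hY𝔥 r) i j, hstep2 _ (hX𝔥 r) i j]
      _ = ∑ i, ∑ r, ∑ j, Q (Y r) (p𝔥 ⁅Z i, Z j⁆) * Q (X r) (p𝔥 ⁅Z i, Z j⁆) := Finset.sum_comm
      _ = ∑ i, ∑ j, ∑ r, Q (Y r) (p𝔥 ⁅Z i, Z j⁆) * Q (X r) (p𝔥 ⁅Z i, Z j⁆) :=
          Finset.sum_congr rfl fun i _ => Finset.sum_comm
      _ = ∑ i, ∑ j, Q (p𝔥 ⁅Z i, Z j⁆) (p𝔥 ⁅Z i, Z j⁆) :=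
          Finset.sum_congr rfl fun i _ => Finset.sum_congr rfl fun j _ => hinner _ (hmem𝔥 _)
  have hP2 : (∑ r, ∑ i, Q ⁅X r, ⁅Y r, Z i⁆⁆ (Z i))
      = -∑ r, ∑ i, Q ⁅X r, Z i⁆ ⁅Y r, Z i⁆ := by
    have hterm : ∀ (r : Fin m) (i : Fin n),
        Q ⁅X r, ⁅Y r, Z i⁆⁆ (Z i) = -Q ⁅X r, Z i⁆ ⁅Y r, Z i⁆ := by
      intro r i
      rw [hinv2, hQsymm ⁅Y r, Z i⁆ ⁅X r, Z i⁆]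
    calc (∑ r, ∑ i, Q ⁅X r, ⁅Y r, Z i⁆⁆ (Z i))
        = ∑ r, ∑ i, -Q ⁅X r, Z i⁆ ⁅Y r, Z i⁆ :=
          Finset.sum_congr rfl fun r _ => Finset.sum_congr rfl fun i _ => hterm r i
      _ = -∑ r, ∑ i, Q ⁅X r, Z i⁆ ⁅Y r, Z i⁆ := by simp
  have hP3 : (∑ i, ∑ r, Q ⁅Z i, ⁅Z i, X r⁆⁆ (Y r))
      = -∑ r, ∑ i, Q ⁅X r, Z i⁆ ⁅Y r, Z i⁆ := by
    have hterm : ∀ (i : Fin n) (r : Fin m),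
        Q ⁅Z i, ⁅Z i, X r⁆⁆ (Y r) = -Q ⁅X r, Z i⁆ ⁅Y r, Z i⁆ := by
      intro i r
      rw [hinv2]
      have e1 : ⁅Z i, X r⁆ = -⁅X r, Z i⁆ := by rw [← lie_skew]
      have e2 : ⁅Z i, Y r⁆ = -⁅Y r, Z i⁆ := by rw [← lie_skew]
      rw [e1, e2]
      simp only [map_neg, LinearMap.neg_apply, neg_neg]
    calc (∑ i, ∑ r, Q ⁅Z i, ⁅Z i, X r⁆⁆ (Y r))
        = ∑ i, ∑ r, -Q ⁅X r, Z i⁆ ⁅Y r, Z i⁆ :=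
          Finset.sum_congr rfl fun i _ => Finset.sum_congr rfl fun r _ => hterm i r
      _ = -∑ i, ∑ r, Q ⁅X r, Z i⁆ ⁅Y r, Z i⁆ := by simp
      _ = -∑ r, ∑ i, Q ⁅X r, Z i⁆ ⁅Y r, Z i⁆ := congrArg Neg.neg Finset.sum_comm
  have hP4 : (∑ i, ∑ j, Q ⁅Z i, ⁅Z i, Z j⁆⁆ (Z j))
      = -((∑ i, ∑ j, Q (p𝔥 ⁅Z i, Z j⁆) (p𝔥 ⁅Z i, Z j⁆))
          + ∑ i, ∑ j, Q (p𝔪 ⁅Z i, Z j⁆) (p𝔪 ⁅Z i, Z j⁆)) := by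
    have hterm : ∀ i j : Fin n, Q ⁅Z i, ⁅Z i, Z j⁆⁆ (Z j)
        = -(Q (p𝔥 ⁅Z i, Z j⁆) (p𝔥 ⁅Z i, Z j⁆) + Q (p𝔪 ⁅Z i, Z j⁆) (p𝔪 ⁅Z i, Z j⁆)) := by
      intro i j
      rw [hinv2, hsplit i j]
    calc (∑ i, ∑ j, Q ⁅Z i, ⁅Z i, Z j⁆⁆ (Z j))
        = ∑ i, ∑ j, -(Q (p𝔥 ⁅Z i, Z j⁆) (p𝔥 ⁅Z i, Z j⁆)
            + Q (p𝔪 ⁅Z i, Z j⁆) (p𝔪 ⁅Z i, Z j⁆)) :=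
          Finset.sum_congr rfl fun i _ => Finset.sum_congr rfl fun j _ => hterm i j
      _ = _ := by
          simp [neg_add, Finset.sum_add_distrib]
  have hC : (∑ r, Q (-∑ r', ⁅X r', ⁅Y r', X r⁆⁆) (Y r))
      = -∑ r, ∑ r', Q ⁅X r, ⁅Y r, X r'⁆⁆ (Y r') := by
    calc (∑ r, Q (-∑ r', ⁅X r', ⁅Y r', X r⁆⁆) (Y r))
        = ∑ r, -∑ r', Q ⁅X r', ⁅Y r', X r⁆⁆ (Y r) := by
          refine Finset.sum_congr rfl fun r _ => ?_
          rw [map_neg, LinearMap.neg_apply, map_sum, LinearMap.sum_apply]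
      _ = -∑ r, ∑ r', Q ⁅X r', ⁅Y r', X r⁆⁆ (Y r) := by simp
      _ = -∑ r, ∑ r', Q ⁅X r, ⁅Y r, X r'⁆⁆ (Y r') := congrArg Neg.neg Finset.sum_comm
  have e1 : (∑ r, LinearMap.trace ℝ 𝔤 ((LieAlgebra.ad ℝ 𝔤 (X r)) ∘ₗ (LieAlgebra.ad ℝ 𝔤 (Y r))))
      = (∑ r, ∑ r', Q ⁅X r, ⁅Y r, X r'⁆⁆ (Y r'))
        + ∑ r, ∑ i, Q ⁅X r, ⁅Y r, Z i⁆⁆ (Z i) := by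
    rw [← Finset.sum_add_distrib]
    exact Finset.sum_congr rfl fun r _ => htrad (X r) (Y r)
  have e2 : (∑ i, LinearMap.trace ℝ 𝔤 ((LieAlgebra.ad ℝ 𝔤 (Z i)) ∘ₗ (LieAlgebra.ad ℝ 𝔤 (Z i))))
      = (∑ i, ∑ r, Q ⁅Z i, ⁅Z i, X r⁆⁆ (Y r))
        + ∑ i, ∑ j, Q ⁅Z i, ⁅Z i, Z j⁆⁆ (Z j) := by
    rw [← Finset.sum_add_distrib]
    exact Finset.sum_congr rfl fun i _ => htrad (Z i) (Z i)
  have htrace : LinearMap.trace ℝ 𝔤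
      (-∑ s, (LieAlgebra.ad ℝ 𝔤 (A s)) ∘ₗ (LieAlgebra.ad ℝ 𝔤 (B s)))
      = -((∑ r, ∑ r', Q ⁅X r, ⁅Y r, X r'⁆⁆ (Y r'))
          + (∑ r, ∑ i, Q ⁅X r, ⁅Y r, Z i⁆⁆ (Z i))
          + (∑ i, ∑ r, Q ⁅Z i, ⁅Z i, X r⁆⁆ (Y r))
          + (∑ i, ∑ j, Q ⁅Z i, ⁅Z i, Z j⁆⁆ (Z j))) := by
    rw [map_neg, map_sum, hswap, e1, e2]
    ring
  rw [htrace, hC]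
  linarith [hP2, hP3, hP4, hS]
end

section
/- Let X_1,…,X_m and Y_1,…,Y_m be bases of 𝔥 dual with respect to Q_𝔥 and C_𝔥 := −Σ_r ad(X_r) ∘ ad(Y_r) (it preserves 𝔪); let β(X,Y) := −tr_𝔤(ad X ∘ ad Y) be the negative of the Killing form of 𝔤. Then for all X,Y ∈ 𝔪: (i) ⟨C_𝔥 X, Y⟩ = Σ_i Q_𝔥([X,Z_i]_𝔥, [Y,Z_i]_𝔥); (ii) β(X,Y) = Σ_i ⟨[X,Z_i]_𝔪,[Y,Z_i]_𝔪⟩ + 2 Σ_i Q_𝔥([X,Z_i]_𝔥,[Y,Z_i]_𝔥). -/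
/-! Both identities are computed in the `Q`-dual frame `(X_r, Z_i)`, `(Y_r, Z_i)` of
`𝔤 = 𝔥 ⊕ 𝔪`. By invariance the Casimir pairing `⟨C_𝔥 x, y⟩` is `Σ_r Q([Y_r,x],[X_r,y])`;
expanding the `𝔥`-components in the dual bases and using the cyclicity
`Q([a,b],c) = Q([c,a],b)` turns `Σ_i Q([x,Z_i]_𝔥,[y,Z_i]_𝔥)` into the same sum, by Parseval
in `𝔪`. In the same frame `tr(ad x ∘ ad y) = -Σ_r Q([x,Y_r],[y,X_r]) - Σ_i Q([x,Z_i],[y,Z_i])`: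
the first sum is the Casimir term again and the second splits orthogonally into its
`𝔪`- and `𝔥`-parts, which gives the factor 2. -/

theorem LinearMap.trace_eq_sum_of_sum_smul_eq {R M ι : Type*} [CommRing R] [AddCommGroup M]
    [Module R M] [Module.Free R M] [Module.Finite R M] [Fintype ι]
    {e : ι → M} {ε : ι → Module.Dual R M} (h : ∀ g, ∑ j, ε j g • e j = g) (f : M →ₗ[R] M) :
    trace R M f = ∑ j, ε j (f (e j)) := by
  have hf : f = ∑ j, (ε j).smulRight (f (e j)) := by
    ext g
    conv_lhs => rw [← h g]
    simp
  conv_lhs => rw [hf]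
  simp only [map_sum, trace_smulRight]

namespace LinearMap.BilinForm

variable {R M ι κ : Type*} [CommRing R] [AddCommGroup M] [Module R M] [Fintype ι] [Fintype κ]
  {B : LinearMap.BilinForm R M}

theorem sum_smul_eq_of_mem_span [DecidableEq ι] {e e' : ι → M}
    (hdual : ∀ r s, B (e r) (e' s) = if r = s then 1 else 0) {v : M}
    (hv : v ∈ Submodule.span R (Set.range e)) : ∑ r, B v (e' r) • e r = v := by
  obtain ⟨c, rfl⟩ := (Submodule.mem_span_range_iff_exists_fun R).1 hv
  congr! with r
  simp [hdual]

theorem apply_eq_sum_mul_of_mem_span [DecidableEq ι] {e e' : ι → M}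
    (hdual : ∀ r s, B (e r) (e' s) = if r = s then 1 else 0) {v : M}
    (hv : v ∈ Submodule.span R (Set.range e)) (w : M) :
    B v w = ∑ r, B v (e' r) * B (e r) w := by
  conv_lhs => rw [← sum_smul_eq_of_mem_span hdual hv]
  simp

section OrthogonalSplitting

variable {p q : M →ₗ[R] M} {S T : Submodule R M}

theorem apply_proj_left_eq (hB : B.IsSymm) (hsum : ∀ g, p g + q g = g) (hq : ∀ g, q g ∈ T)
    (hST : ∀ x ∈ S, ∀ y ∈ T, B x y = 0) (g : M) {y : M} (hy : y ∈ S) :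
    B (p g) y = B g y := by
  conv_rhs => rw [← hsum g]
  rw [map_add, LinearMap.add_apply, hB.eq (q g), hST y hy _ (hq g), add_zero]

theorem apply_eq_apply_proj_add_apply_proj (hB : B.IsSymm) (hsum : ∀ g, p g + q g = g)
    (hp : ∀ g, p g ∈ S) (hq : ∀ g, q g ∈ T) (hST : ∀ x ∈ S, ∀ y ∈ T, B x y = 0) (a b : M) :
    B a b = B (p a) (p b) + B (q a) (q b) := by
  conv_lhs => rw [← hsum a, ← hsum b]
  simp only [map_add, LinearMap.add_apply]
  rw [hST _ (hp a) _ (hq b), hB.eq (q a), hST _ (hp b) _ (hq a)]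
  ring

theorem sum_smul_add_sum_smul_eq [DecidableEq ι] [DecidableEq κ] (hB : B.IsSymm)
    (hsum : ∀ g, p g + q g = g) (hp : ∀ g, p g ∈ S) (hq : ∀ g, q g ∈ T)
    (hST : ∀ x ∈ S, ∀ y ∈ T, B x y = 0) {e e' : ι → M} (he : Submodule.span R (Set.range e) = S) (he' : ∀ r, e' r ∈ S)
    (hee' : ∀ r s, B (e r) (e' s) = if r = s then 1 else 0)
    {f f' : κ → M} (hf : Submodule.span R (Set.range f) = T) (hf' : ∀ i, f' i ∈ T)
    (hff' : ∀ i j, B (f i) (f' j) = if i = j then 1 else 0) (g : M) :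
    ∑ r, B g (e' r) • e r + ∑ i, B g (f' i) • f i = g := by
  have hTS : ∀ x ∈ T, ∀ y ∈ S, B x y = 0 := fun x hx y hy => (hB.eq x y).trans (hST y hy x hx)
  have hqsum : ∀ g, q g + p g = g := fun g => (add_comm _ _).trans (hsum g)
  simp_rw [← apply_proj_left_eq hB hsum hq hST g (he' _),
    ← apply_proj_left_eq hB hqsum hp hTS g (hf' _)]
  rw [sum_smul_eq_of_mem_span hee' (he ▸ hp g), sum_smul_eq_of_mem_span hff' (hf ▸ hq g), hsum]

end OrthogonalSplitting

section Lie

variable {L : Type*} [LieRing L] [LieAlgebra R L] {Q : LinearMap.BilinForm R L}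

theorem lieInvariant.apply_lie_cycle (hQ : Q.lieInvariant L) (hQs : Q.IsSymm)
    (a b c : L) : Q ⁅a, b⁆ c = Q ⁅c, a⁆ b := by
  rw [hQ, ← lie_skew, map_neg, neg_neg, hQs.eq]

theorem lieInvariant.apply_neg_sum_lie_lie (hQ : Q.lieInvariant L) (X Y : ι → L) (x y : L) :
    Q (-∑ r, ⁅X r, ⁅Y r, x⁆⁆) y = ∑ r, Q ⁅Y r, x⁆ ⁅X r, y⁆ := by
  simp [hQ _ _ y]

theorem lieInvariant.trace_ad_comp_ad_eq_neg_sum [Module.Free R L] [Module.Finite R L]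
    (hQ : Q.lieInvariant L) (hQs : Q.IsSymm) {e e' : ι → L}
    (hframe : ∀ g, ∑ j, Q g (e' j) • e j = g) (x y : L) :
    trace R L (LieAlgebra.ad R L x ∘ₗ LieAlgebra.ad R L y) = -∑ j, Q ⁅x, e' j⁆ ⁅y, e j⁆ := by
  rw [trace_eq_sum_of_sum_smul_eq (ε := fun j => Q.flip (e' j)) hframe, ← Finset.sum_neg_distrib]
  congr! 1 with j
  rw [flip_apply, LinearMap.comp_apply, LieAlgebra.ad_apply, LieAlgebra.ad_apply, hQ,
    hQs.eq ⁅y, e j⁆]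

theorem lieInvariant.sum_apply_proj_lie_eq_sum_apply_lie [DecidableEq ι] [DecidableEq κ]
    (hQ : Q.lieInvariant L) (hQs : Q.IsSymm) {p q : L →ₗ[R] L} {S T : Submodule R L}
    (hsum : ∀ g, p g + q g = g) (hp : ∀ g, p g ∈ S) (hq : ∀ g, q g ∈ T)
    (hST : ∀ x ∈ S, ∀ y ∈ T, Q x y = 0) (hlie : ∀ x ∈ S, ∀ y ∈ T, ⁅x, y⁆ ∈ T)
    {X Y : ι → L} (hX : Submodule.span R (Set.range X) = S) (hY : ∀ r, Y r ∈ S)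
    (hXY : ∀ r s, Q (X r) (Y s) = if r = s then 1 else 0)
    {Z : κ → L} (hZ : Submodule.span R (Set.range Z) = T)
    (hZZ : ∀ i j, Q (Z i) (Z j) = if i = j then 1 else 0) {x : L} (hx : x ∈ T) (y : L) :
    ∑ i, Q (p ⁅x, Z i⁆) (p ⁅y, Z i⁆) = ∑ r, Q ⁅Y r, x⁆ ⁅X r, y⁆ :=
  have hXS (r : ι) : X r ∈ S := hX ▸ Submodule.subset_span ⟨r, rfl⟩
  calc ∑ i, Q (p ⁅x, Z i⁆) (p ⁅y, Z i⁆)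
      = ∑ i, ∑ r, Q ⁅Y r, x⁆ (Z i) * Q (Z i) ⁅X r, y⁆ := by
        congr! 1 with i
        rw [apply_eq_sum_mul_of_mem_span hXY (hX ▸ hp _)]
        congr! 1 with r
        rw [apply_proj_left_eq hQs hsum hq hST _ (hY r), hQs.eq (X r),
          apply_proj_left_eq hQs hsum hq hST _ (hXS r), hQ.apply_lie_cycle hQs,
          hQ.apply_lie_cycle hQs y, hQs.eq ⁅X r, y⁆]
    _ = ∑ r, Q ⁅Y r, x⁆ ⁅X r, y⁆ := by
        rw [Finset.sum_comm]
        congr! 1 with r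
        rw [apply_eq_sum_mul_of_mem_span hZZ (hZ ▸ hlie _ (hY r) _ hx)]

end Lie

end LinearMap.BilinForm

theorem stmt15_general
    {𝔤 : Type*} [LieRing 𝔤] [LieAlgebra ℝ 𝔤] [FiniteDimensional ℝ 𝔤]
    (𝔥 𝔪 : Submodule ℝ 𝔤)
    (p𝔥 p𝔪 : 𝔤 →ₗ[ℝ] 𝔤)
    (hsum : ∀ x, p𝔥 x + p𝔪 x = x)
    (hmem𝔥 : ∀ x, p𝔥 x ∈ 𝔥) (hmem𝔪 : ∀ x, p𝔪 x ∈ 𝔪)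
    (hhm : ∀ x ∈ 𝔥, ∀ y ∈ 𝔪, ⁅x, y⁆ ∈ 𝔪)
    (Q : LinearMap.BilinForm ℝ 𝔤)
    (hQsymm : ∀ x y, Q x y = Q y x)
    (hQinv : ∀ w u v : 𝔤, Q ⁅w, u⁆ v + Q u ⁅w, v⁆ = 0)
    (hQ𝔥𝔪 : ∀ x ∈ 𝔥, ∀ y ∈ 𝔪, Q x y = 0)
    {n : ℕ} (Z : Fin n → 𝔤) (hZ𝔪 : ∀ i, Z i ∈ 𝔪)
    (hZon : ∀ i j, Q (Z i) (Z j) = if i = j then 1 else 0)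
    (hZspan : Submodule.span ℝ (Set.range Z) = 𝔪)
    {m : ℕ} (X Y : Fin m → 𝔤)
    (hY𝔥 : ∀ r, Y r ∈ 𝔥)
    (hdual : ∀ r s, Q (X r) (Y s) = if r = s then 1 else 0)
    (hXspan : Submodule.span ℝ (Set.range X) = 𝔥) :
    ∀ x ∈ 𝔪, ∀ y ∈ 𝔪,
      (Q (-∑ r, ⁅X r, ⁅Y r, x⁆⁆) y = ∑ i, Q (p𝔥 ⁅x, Z i⁆) (p𝔥 ⁅y, Z i⁆)) ∧
      (-(LinearMap.trace ℝ 𝔤 ((LieAlgebra.ad ℝ 𝔤 x) ∘ₗ (LieAlgebra.ad ℝ 𝔤 y))) =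
        ∑ i, Q (p𝔪 ⁅x, Z i⁆) (p𝔪 ⁅y, Z i⁆)
          + 2 * ∑ i, Q (p𝔥 ⁅x, Z i⁆) (p𝔥 ⁅y, Z i⁆)) := by
  intro x hx y _
  have hQ : Q.lieInvariant 𝔤 := fun w u v => eq_neg_of_add_eq_zero_left (hQinv w u v)
  have hQs : Q.IsSymm := ⟨hQsymm⟩
  have hcasimir := hQ.sum_apply_proj_lie_eq_sum_apply_lie hQs hsum hmem𝔥 hmem𝔪 hQ𝔥𝔪 hhm
    hXspan hY𝔥 hdual hZspan hZon hx y
  refine ⟨by rw [hcasimir, hQ.apply_neg_sum_lie_lie], ?_⟩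
  have hframe (g : 𝔤) : ∑ j, Q g (Sum.elim Y Z j) • Sum.elim X Z j = g := by
    rw [Fintype.sum_sum_type]
    exact LinearMap.BilinForm.sum_smul_add_sum_smul_eq hQs hsum hmem𝔥 hmem𝔪 hQ𝔥𝔪
      hXspan hY𝔥 hdual hZspan hZ𝔪 hZon g
  have h𝔥part : ∑ r, Q ⁅x, Y r⁆ ⁅y, X r⁆ = ∑ r, Q ⁅Y r, x⁆ ⁅X r, y⁆ := by
    congr! 1 with r
    rw [← lie_skew (Y r) x, ← lie_skew (X r) y]
    simp only [map_neg, LinearMap.neg_apply, neg_neg]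
  have h𝔪part (i : Fin n) : Q ⁅x, Z i⁆ ⁅y, Z i⁆ =
      Q (p𝔥 ⁅x, Z i⁆) (p𝔥 ⁅y, Z i⁆) + Q (p𝔪 ⁅x, Z i⁆) (p𝔪 ⁅y, Z i⁆) :=
    LinearMap.BilinForm.apply_eq_apply_proj_add_apply_proj hQs hsum hmem𝔥 hmem𝔪 hQ𝔥𝔪 _ _
  rw [hQ.trace_ad_comp_ad_eq_neg_sum hQs hframe, Fintype.sum_sum_type, neg_neg]
  simp only [Sum.elim_inl, Sum.elim_inr, h𝔥part, h𝔪part, Finset.sum_add_distrib, ← hcasimir]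
  ring

/-- With dual bases `X_r, Y_r` of `𝔥` w.r.t. `Q_𝔥`, the Casimir operator
`C_𝔥 = −Σ_r ad(X_r)∘ad(Y_r)` and `β(X,Y) = −tr_𝔤(ad X ∘ ad Y)` satisfy, for `X,Y ∈ 𝔪`:
(i) `⟨C_𝔥 X, Y⟩ = Σ_i Q_𝔥([X,Z_i]_𝔥,[Y,Z_i]_𝔥)`;
(ii) `β(X,Y) = Σ_i ⟨[X,Z_i]_𝔪,[Y,Z_i]_𝔪⟩ + 2 Σ_i Q_𝔥([X,Z_i]_𝔥,[Y,Z_i]_𝔥)`. -/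
theorem stmt15
    {𝔤 : Type*} [LieRing 𝔤] [LieAlgebra ℝ 𝔤] [FiniteDimensional ℝ 𝔤]
    (𝔥 𝔪 : Submodule ℝ 𝔤)
    (p𝔥 p𝔪 : 𝔤 →ₗ[ℝ] 𝔤)
    (hsum : ∀ x, p𝔥 x + p𝔪 x = x)
    (hmem𝔥 : ∀ x, p𝔥 x ∈ 𝔥) (hmem𝔪 : ∀ x, p𝔪 x ∈ 𝔪)
    (hid𝔥 : ∀ x ∈ 𝔥, p𝔥 x = x) (hid𝔪 : ∀ x ∈ 𝔪, p𝔪 x = x)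
    (hsub : ∀ x ∈ 𝔥, ∀ y ∈ 𝔥, ⁅x, y⁆ ∈ 𝔥)
    (hhm : ∀ x ∈ 𝔥, ∀ y ∈ 𝔪, ⁅x, y⁆ ∈ 𝔪)
    (Q : LinearMap.BilinForm ℝ 𝔤)
    (hQsymm : ∀ x y, Q x y = Q y x)
    (hQinv : ∀ w u v : 𝔤, Q ⁅w, u⁆ v + Q u ⁅w, v⁆ = 0)
    (hQ𝔥𝔪 : ∀ x ∈ 𝔥, ∀ y ∈ 𝔪, Q x y = 0)
    (hQpos𝔪 : ∀ x ∈ 𝔪, x ≠ 0 → 0 < Q x x)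
    (hQ𝔥nd : ∀ x ∈ 𝔥, (∀ y ∈ 𝔥, Q x y = 0) → x = 0)
    {n : ℕ} (Z : Fin n → 𝔤) (hZ𝔪 : ∀ i, Z i ∈ 𝔪)
    (hZon : ∀ i j, Q (Z i) (Z j) = if i = j then 1 else 0)
    (hZspan : Submodule.span ℝ (Set.range Z) = 𝔪)
    {m : ℕ} (X Y : Fin m → 𝔤)
    (hX𝔥 : ∀ r, X r ∈ 𝔥) (hY𝔥 : ∀ r, Y r ∈ 𝔥)
    (hdual : ∀ r s, Q (X r) (Y s) = if r = s then 1 else 0)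
    (hXspan : Submodule.span ℝ (Set.range X) = 𝔥)
    (hYspan : Submodule.span ℝ (Set.range Y) = 𝔥) :
    ∀ x ∈ 𝔪, ∀ y ∈ 𝔪,
      (Q (-∑ r, ⁅X r, ⁅Y r, x⁆⁆) y = ∑ i, Q (p𝔥 ⁅x, Z i⁆) (p𝔥 ⁅y, Z i⁆)) ∧
      (-(LinearMap.trace ℝ 𝔤 ((LieAlgebra.ad ℝ 𝔤 x) ∘ₗ (LieAlgebra.ad ℝ 𝔤 y))) =
        ∑ i, Q (p𝔪 ⁅x, Z i⁆) (p𝔪 ⁅y, Z i⁆)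
          + 2 * ∑ i, Q (p𝔥 ⁅x, Z i⁆) (p𝔥 ⁅y, Z i⁆)) :=
  stmt15_general 𝔥 𝔪 p𝔥 p𝔪 hsum hmem𝔥 hmem𝔪 hhm Q hQsymm hQinv hQ𝔥𝔪 Z hZ𝔪 hZon hZspan X Y hY𝔥 hdual
    hXspan
end

section
/- Let X_1,…,X_m and Y_1,…,Y_m be bases of 𝔥 dual with respect to Q_𝔥, C_𝔥 := −Σ_r ad(X_r) ∘ ad(Y_r), A(X,Y) := ⟨C_𝔥 X, Y⟩ for X,Y ∈ 𝔪, and β(X,Y) := −tr_𝔤(ad X ∘ ad Y). Then for all t ∈ ℝ and all X,Y ∈ 𝔪, the Ricci tensor of the connection Λ^t satisfies Ric^t(X,Y) := Σ_i ⟨R^t(X,Z_i)Z_i, Y⟩ = (t−t²)·β(X,Y) + (2t²−2t+1)·A(X,Y). -/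
/-! Since `[Z, Z] = 0`, the curvature reduces to
`R^t(X,Z)Z = (t - t²)[Z,[X,Z]_𝔪]_𝔪 - [[X,Z]_𝔥, Z]`, so by invariance of `Q`,
`Ric^t(X,Y) = (t - t²) M + H` with `M = Σ_i Q([X,Z_i]_𝔪, [Y,Z_i])` and
`H = Σ_i Q([X,Z_i]_𝔥, [Y,Z_i])`. Computing `tr(ad X ∘ ad Y)` in the frame `(Z_i, X_r)` of `𝔤`,
whose `Q`-dual frame is `(Z_i, Y_r)`, gives `β = M + H + K` with `K = Σ_r Q([Y_r,X], [X_r,Y])`.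
Invariance gives `A = K`, and expanding `[X,Z_i]_𝔥` in the basis `X_r` and then summing over the
orthonormal basis of `𝔪` gives `H = K`. Hence `Ric^t = (t - t²) M + K = (t - t²) β + (2t² - 2t + 1) A`.
-/

open scoped BigOperators

namespace LinearMap

variable {R M ι : Type*} [CommRing R] [AddCommGroup M] [Module R M] [Fintype ι]

theorem trace_eq_sum_of_sum_smul_eq_s16 [Module.Free R M] [Module.Finite R M]
    (b : ι → M) (f : ι → Module.Dual R M) (hbf : ∀ v, ∑ a, f a v • b a = v)
    (L : M →ₗ[R] M) :
    trace R M L = ∑ a, f a (L (b a)) := by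
  have hL : L = ∑ a, (f a).smulRight (L (b a)) := by
    ext v
    simp only [coe_sum, Finset.sum_apply, smulRight_apply, ← map_smul, ← map_sum, hbf]
  calc trace R M L = trace R M (∑ a, (f a).smulRight (L (b a))) := congrArg _ hL
    _ = ∑ a, f a (L (b a)) := by simp only [map_sum, trace_smulRight]

namespace BilinForm

variable [DecidableEq ι] (B : LinearMap.BilinForm R M) {b c : ι → M}

theorem sum_apply_smul_eq_of_mem_span (hbc : ∀ i j, B (b i) (c j) = if i = j then 1 else 0)
    {v : M} (hv : v ∈ Submodule.span R (Set.range b)) :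
    ∑ i, B v (c i) • b i = v := by
  obtain ⟨a, rfl⟩ := (Submodule.mem_span_range_iff_exists_fun R).mp hv
  refine Finset.sum_congr rfl fun i _ => ?_
  simp [hbc]

theorem apply_eq_sum_mul_of_mem_span_s16 (hbc : ∀ i j, B (b i) (c j) = if i = j then 1 else 0)
    (u : M) {v : M} (hv : v ∈ Submodule.span R (Set.range b)) :
    B u v = ∑ i, B u (b i) * B v (c i) := by
  conv_lhs => rw [← B.sum_apply_smul_eq_of_mem_span hbc hv]
  simp only [map_sum, map_smul, smul_eq_mul, mul_comm]

theorem sum_apply_smul_eq_proj (hbc : ∀ i j, B (b i) (c j) = if i = j then 1 else 0)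
    {p q : M →ₗ[R] M} (hpq : ∀ v, q v + p v = v) (hp : ∀ v, p v ∈ Submodule.span R (Set.range b))
    (hq : ∀ v i, B (q v) (c i) = 0) (v : M) :
    ∑ i, B v (c i) • b i = p v := by
  conv_rhs => rw [← B.sum_apply_smul_eq_of_mem_span hbc (hp v)]
  refine Finset.sum_congr rfl fun i _ => ?_
  conv_lhs => rw [← hpq v]
  rw [map_add, LinearMap.add_apply, hq, zero_add]

end BilinForm

end LinearMap

section InvariantForm

variable {R 𝔤 ι : Type*} [CommRing R] [LieRing 𝔤] [LieAlgebra R 𝔤] [Fintype ι]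
  {Q : LinearMap.BilinForm R 𝔤}

theorem lie_apply_eq_apply_lie (hQinv : ∀ w u v : 𝔤, Q ⁅w, u⁆ v + Q u ⁅w, v⁆ = 0)
    (a b c : 𝔤) : Q ⁅a, b⁆ c = Q a ⁅b, c⁆ := by
  have h := hQinv b a c
  rw [← lie_skew, map_neg, LinearMap.neg_apply] at h
  linear_combination -h

theorem trace_ad_comp_ad_eq_neg_sum [Module.Free R 𝔤] [Module.Finite R 𝔤]
    (hQinv : ∀ w u v : 𝔤, Q ⁅w, u⁆ v + Q u ⁅w, v⁆ = 0) {b c : ι → 𝔤}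
    (hframe : ∀ v, ∑ a, Q v (c a) • b a = v) (x y : 𝔤) :
    LinearMap.trace R 𝔤 (LieAlgebra.ad R 𝔤 x ∘ₗ LieAlgebra.ad R 𝔤 y) =
      -∑ a, Q ⁅y, b a⁆ ⁅x, c a⁆ := by
  rw [LinearMap.trace_eq_sum_of_sum_smul_eq_s16 b (fun a => LinearMap.flip Q (c a)) hframe,
    ← Finset.sum_neg_distrib]
  refine Finset.sum_congr rfl fun a _ => ?_
  rw [LinearMap.flip_apply]; simp only [LinearMap.comp_apply, LieAlgebra.ad_apply]
  linear_combination hQinv x ⁅y, b a⁆ (c a)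

end InvariantForm

section ReductiveSplitting

variable {R 𝔤 ι κ : Type*} [CommRing R] [LieRing 𝔤] [LieAlgebra R 𝔤]
  [Fintype ι] [Fintype κ] {Q : LinearMap.BilinForm R 𝔤} {p𝔥 p𝔪 : 𝔤 →ₗ[R] 𝔤}
  {Z : ι → 𝔤} {X Y : κ → 𝔤}

theorem sum_proj_lie_apply_lie_eq [DecidableEq ι] (hQsymm : ∀ u v, Q u v = Q v u)
    (hQinv : ∀ w u v : 𝔤, Q ⁅w, u⁆ v + Q u ⁅w, v⁆ = 0)
    (hexp𝔥 : ∀ v, ∑ r, Q v (Y r) • X r = p𝔥 v)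
    (hZon : ∀ i j, Q (Z i) (Z j) = if i = j then 1 else 0) {y : 𝔤}
    (hXy : ∀ r, ⁅X r, y⁆ ∈ Submodule.span R (Set.range Z)) (x : 𝔤) :
    ∑ i, Q (p𝔥 ⁅x, Z i⁆) ⁅y, Z i⁆ = ∑ r, Q ⁅Y r, x⁆ ⁅X r, y⁆ := by
  have hterm : ∀ i r, Q ⁅x, Z i⁆ (Y r) * Q (X r) ⁅y, Z i⁆ =
      Q ⁅Y r, x⁆ (Z i) * Q ⁅X r, y⁆ (Z i) := by
    intro i r
    have hY : Q ⁅Y r, x⁆ (Z i) = -Q (Z i) ⁅x, Y r⁆ := by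
      rw [hQsymm, ← lie_skew x (Y r), map_neg, neg_neg]
    rw [hY, ← lie_apply_eq_apply_lie hQinv]
    linear_combination Q ⁅X r, y⁆ (Z i) * hQinv x (Z i) (Y r)
  calc ∑ i, Q (p𝔥 ⁅x, Z i⁆) ⁅y, Z i⁆
      = ∑ i, ∑ r, Q ⁅x, Z i⁆ (Y r) * Q (X r) ⁅y, Z i⁆ := by
        simp only [← hexp𝔥, map_sum, map_smul, LinearMap.coe_sum, Finset.sum_apply,
          LinearMap.smul_apply, smul_eq_mul]
    _ = ∑ r, ∑ i, Q ⁅Y r, x⁆ (Z i) * Q ⁅X r, y⁆ (Z i) := by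
        rw [Finset.sum_comm]; simp only [hterm]
    _ = ∑ r, Q ⁅Y r, x⁆ ⁅X r, y⁆ := by
        simp only [← Q.apply_eq_sum_mul_of_mem_span_s16 hZon _ (hXy _)]

theorem neg_trace_ad_comp_ad_eq [Module.Free R 𝔤] [Module.Finite R 𝔤]
    (hQsymm : ∀ u v, Q u v = Q v u) (hQinv : ∀ w u v : 𝔤, Q ⁅w, u⁆ v + Q u ⁅w, v⁆ = 0)
    (hsum : ∀ x, p𝔥 x + p𝔪 x = x) (hexp𝔪 : ∀ v, ∑ i, Q v (Z i) • Z i = p𝔪 v)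
    (hexp𝔥 : ∀ v, ∑ r, Q v (Y r) • X r = p𝔥 v) (x y : 𝔤) :
    -LinearMap.trace R 𝔤 (LieAlgebra.ad R 𝔤 x ∘ₗ LieAlgebra.ad R 𝔤 y) =
      ∑ i, Q (p𝔥 ⁅x, Z i⁆) ⁅y, Z i⁆ + ∑ i, Q (p𝔪 ⁅x, Z i⁆) ⁅y, Z i⁆ +
        ∑ r, Q ⁅Y r, x⁆ ⁅X r, y⁆ := by
  have hframe : ∀ v, ∑ a, Q v (Sum.elim Z Y a) • Sum.elim Z X a = v := by
    intro v
    rw [Fintype.sum_sum_type]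
    simp only [Sum.elim_inl, Sum.elim_inr, hexp𝔪, hexp𝔥]
    rw [add_comm, hsum]
  rw [trace_ad_comp_ad_eq_neg_sum hQinv hframe, neg_neg, Fintype.sum_sum_type,
    ← Finset.sum_add_distrib]
  simp only [Sum.elim_inl, Sum.elim_inr]
  congr 1
  · refine Finset.sum_congr rfl fun i _ => ?_
    rw [← LinearMap.add_apply, ← map_add, hsum, hQsymm]
  · refine Finset.sum_congr rfl fun r _ => ?_
    rw [hQsymm, ← lie_skew x (Y r), ← lie_skew y (X r)]
    simp only [map_neg, LinearMap.neg_apply, neg_neg]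

end ReductiveSplitting

section Curvature

variable {𝔤 : Type*} [LieRing 𝔤] [LieAlgebra ℝ 𝔤] {Q : LinearMap.BilinForm ℝ 𝔤}
  {p𝔥 p𝔪 : 𝔤 →ₗ[ℝ] 𝔤}

theorem apply_curvRt_self (hQinv : ∀ w u v : 𝔤, Q ⁅w, u⁆ v + Q u ⁅w, v⁆ = 0)
    (hsum : ∀ x, p𝔥 x + p𝔪 x = x) {y : 𝔤} (hy : ∀ w, Q (p𝔥 w) y = 0) (t : ℝ) (x z : 𝔤) :
    Q (curvRt p𝔥 p𝔪 t x z z) y =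
      (t - t ^ 2) * Q (p𝔪 ⁅x, z⁆) ⁅y, z⁆ + Q (p𝔥 ⁅x, z⁆) ⁅y, z⁆ := by
  have hp𝔪 : ∀ w, Q (p𝔪 w) y = Q w y := fun w => by
    conv_rhs => rw [← hsum w]
    rw [map_add, LinearMap.add_apply, hy, zero_add]
  have hleft : ∀ w, Q ⁅z, w⁆ y = Q w ⁅y, z⁆ := fun w => by
    rw [← lie_skew y z, map_neg]
    linear_combination hQinv z w y
  have hright : ∀ w, Q ⁅w, z⁆ y = -Q w ⁅y, z⁆ := fun w => by
    rw [lie_apply_eq_apply_lie hQinv, ← lie_skew y z, map_neg, neg_neg]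
  simp only [curvRt, lie_self, map_zero, smul_zero, lie_zero, lie_smul, map_smul, map_sub,
    LinearMap.zero_apply, LinearMap.sub_apply, LinearMap.smul_apply, smul_eq_mul, hp𝔪, hleft, hright]
  ring

end Curvature

theorem stmt16_general
    {𝔤 : Type*} [LieRing 𝔤] [LieAlgebra ℝ 𝔤] [FiniteDimensional ℝ 𝔤]
    (𝔥 𝔪 : Submodule ℝ 𝔤)
    (p𝔥 p𝔪 : 𝔤 →ₗ[ℝ] 𝔤)
    (hsum : ∀ x, p𝔥 x + p𝔪 x = x)
    (hmem𝔥 : ∀ x, p𝔥 x ∈ 𝔥) (hmem𝔪 : ∀ x, p𝔪 x ∈ 𝔪)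
    (hhm : ∀ x ∈ 𝔥, ∀ y ∈ 𝔪, ⁅x, y⁆ ∈ 𝔪)
    (Q : LinearMap.BilinForm ℝ 𝔤)
    (hQsymm : ∀ x y, Q x y = Q y x)
    (hQinv : ∀ w u v : 𝔤, Q ⁅w, u⁆ v + Q u ⁅w, v⁆ = 0)
    (hQ𝔥𝔪 : ∀ x ∈ 𝔥, ∀ y ∈ 𝔪, Q x y = 0)
    {n : ℕ} (Z : Fin n → 𝔤) (hZ𝔪 : ∀ i, Z i ∈ 𝔪)
    (hZon : ∀ i j, Q (Z i) (Z j) = if i = j then 1 else 0)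
    (hZspan : Submodule.span ℝ (Set.range Z) = 𝔪)
    {m : ℕ} (X Y : Fin m → 𝔤)
    (hX𝔥 : ∀ r, X r ∈ 𝔥) (hY𝔥 : ∀ r, Y r ∈ 𝔥)
    (hdual : ∀ r s, Q (X r) (Y s) = if r = s then 1 else 0)
    (hXspan : Submodule.span ℝ (Set.range X) = 𝔥) :
    ∀ t : ℝ, ∀ x ∈ 𝔪, ∀ y ∈ 𝔪,
      ∑ i, Q (curvRt p𝔥 p𝔪 t x (Z i) (Z i)) y =
        (t - t ^ 2) *
            (-(LinearMap.trace ℝ 𝔤 ((LieAlgebra.ad ℝ 𝔤 x) ∘ₗ (LieAlgebra.ad ℝ 𝔤 y))))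
          + (2 * t ^ 2 - 2 * t + 1) * Q (-∑ r, ⁅X r, ⁅Y r, x⁆⁆) y := by
  intro t x _ y hy
  have h𝔥𝔪 : ∀ u, ∀ v ∈ 𝔪, Q (p𝔥 u) v = 0 := fun u => hQ𝔥𝔪 _ (hmem𝔥 u)
  have hexp𝔪 : ∀ v, ∑ i, Q v (Z i) • Z i = p𝔪 v :=
    Q.sum_apply_smul_eq_proj hZon hsum (fun v => hZspan ▸ hmem𝔪 v)
      fun v i => h𝔥𝔪 v _ (hZ𝔪 i)
  have hexp𝔥 : ∀ v, ∑ r, Q v (Y r) • X r = p𝔥 v :=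
    Q.sum_apply_smul_eq_proj hdual (fun v => (add_comm _ _).trans (hsum v))
      (fun v => hXspan ▸ hmem𝔥 v) fun v r => (hQsymm _ _).trans (hQ𝔥𝔪 _ (hY𝔥 r) _ (hmem𝔪 v))
  have hcasimir : Q (-∑ r, ⁅X r, ⁅Y r, x⁆⁆) y = ∑ r, Q ⁅Y r, x⁆ ⁅X r, y⁆ := by
    simp only [map_neg, map_sum, LinearMap.neg_apply, LinearMap.coe_sum, Finset.sum_apply,
      ← Finset.sum_neg_distrib]
    exact Finset.sum_congr rfl fun r _ => by linear_combination -hQinv (X r) ⁅Y r, x⁆ y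
  have h𝔥part := sum_proj_lie_apply_lie_eq hQsymm hQinv hexp𝔥 hZon
    (fun r => hZspan ▸ hhm _ (hX𝔥 r) y hy) x
  simp only [apply_curvRt_self hQinv hsum (h𝔥𝔪 · y hy), Finset.sum_add_distrib,
    ← Finset.mul_sum]
  rw [neg_trace_ad_comp_ad_eq hQsymm hQinv hsum hexp𝔪 hexp𝔥, hcasimir, h𝔥part]
  ring

/-- Wang–Ziller type formula.  With `A(X,Y) = ⟨C_𝔥 X, Y⟩` for the
Casimir operator `C_𝔥 = −Σ_r ad(X_r)∘ad(Y_r)` of `𝔥` and `β(X,Y) = −tr_𝔤(ad X ∘ ad Y)`,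
the Ricci tensor of `Λ^t` satisfies
`Ric^t(X,Y) = (t−t²)β(X,Y) + (2t²−2t+1)A(X,Y)` for all `X,Y ∈ 𝔪`. -/
theorem stmt16
    {𝔤 : Type*} [LieRing 𝔤] [LieAlgebra ℝ 𝔤] [FiniteDimensional ℝ 𝔤]
    (𝔥 𝔪 : Submodule ℝ 𝔤)
    (p𝔥 p𝔪 : 𝔤 →ₗ[ℝ] 𝔤)
    (hsum : ∀ x, p𝔥 x + p𝔪 x = x)
    (hmem𝔥 : ∀ x, p𝔥 x ∈ 𝔥) (hmem𝔪 : ∀ x, p𝔪 x ∈ 𝔪)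
    (hid𝔥 : ∀ x ∈ 𝔥, p𝔥 x = x) (hid𝔪 : ∀ x ∈ 𝔪, p𝔪 x = x)
    (hsub : ∀ x ∈ 𝔥, ∀ y ∈ 𝔥, ⁅x, y⁆ ∈ 𝔥)
    (hhm : ∀ x ∈ 𝔥, ∀ y ∈ 𝔪, ⁅x, y⁆ ∈ 𝔪)
    (Q : LinearMap.BilinForm ℝ 𝔤)
    (hQsymm : ∀ x y, Q x y = Q y x)
    (hQinv : ∀ w u v : 𝔤, Q ⁅w, u⁆ v + Q u ⁅w, v⁆ = 0)
    (hQ𝔥𝔪 : ∀ x ∈ 𝔥, ∀ y ∈ 𝔪, Q x y = 0)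
    (hQpos𝔪 : ∀ x ∈ 𝔪, x ≠ 0 → 0 < Q x x)
    (hQ𝔥nd : ∀ x ∈ 𝔥, (∀ y ∈ 𝔥, Q x y = 0) → x = 0)
    {n : ℕ} (Z : Fin n → 𝔤) (hZ𝔪 : ∀ i, Z i ∈ 𝔪)
    (hZon : ∀ i j, Q (Z i) (Z j) = if i = j then 1 else 0)
    (hZspan : Submodule.span ℝ (Set.range Z) = 𝔪)
    {m : ℕ} (X Y : Fin m → 𝔤)
    (hX𝔥 : ∀ r, X r ∈ 𝔥) (hY𝔥 : ∀ r, Y r ∈ 𝔥)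
    (hdual : ∀ r s, Q (X r) (Y s) = if r = s then 1 else 0)
    (hXspan : Submodule.span ℝ (Set.range X) = 𝔥)
    (hYspan : Submodule.span ℝ (Set.range Y) = 𝔥) :
    ∀ t : ℝ, ∀ x ∈ 𝔪, ∀ y ∈ 𝔪,
      ∑ i, Q (curvRt p𝔥 p𝔪 t x (Z i) (Z i)) y =
        (t - t ^ 2) *
            (-(LinearMap.trace ℝ 𝔤 ((LieAlgebra.ad ℝ 𝔤 x) ∘ₗ (LieAlgebra.ad ℝ 𝔤 y))))
          + (2 * t ^ 2 - 2 * t + 1) * Q (-∑ r, ⁅X r, ⁅Y r, x⁆⁆) y :=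
  stmt16_general 𝔥 𝔪 p𝔥 p𝔪 hsum hmem𝔥 hmem𝔪 hhm Q hQsymm hQinv hQ𝔥𝔪 Z hZ𝔪 hZon hZspan X Y hX𝔥 hY𝔥
    hdual hXspan
end

section
/- Suppose β(X,Y) := −tr_𝔤(ad X ∘ ad Y) is positive definite on 𝔪, and suppose there exists a nonzero vector v ∈ 𝔪 fixed by the isotropy representation, i.e. [W,v] = 0 for all W ∈ 𝔥. If for some t ∈ ℝ the Ricci tensor of the connection Λ^t vanishes on v, i.e. Ric^t(v,v) := Σ_i ⟨R^t(v,Z_i)Z_i, v⟩ = 0, then t = 0 or t = 1. In particular, only the canonical connection (t = 0) and the anticanonical connection (t = 1) can be Ricci-flat. -/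
open scoped BigOperators

/-!
Since `v` commutes with `𝔥`, invariance of `Q` makes `[v, X]` orthogonal to `𝔥`, so
`[v, X] ∈ 𝔪` for every `X`. Then `R^t(v, Z)Z = (t - t²)[Z, [v, Z]]_𝔪`, and invariance once more
gives `Ric^t(v, v) = (t - t²) Σᵢ ‖[v, Zᵢ]‖²`. The sum is positive: otherwise `ad v` would vanish
on `𝔪` and on `𝔥`, hence on `𝔤`, so `β(v, v) = 0`.
-/

open LinearMap (BilinForm)

section ReductiveDecomposition

variable {𝔤 : Type*} [LieRing 𝔤] [LieAlgebra ℝ 𝔤] {𝔥 𝔪 : Submodule ℝ 𝔤}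
  {p𝔥 p𝔪 : 𝔤 →ₗ[ℝ] 𝔤} {Q : BilinForm ℝ 𝔤}

theorem curvRt_apply_self_of_proj𝔥_eq_zero (hsum : ∀ x, p𝔥 x + p𝔪 x = x) (t : ℝ) {x y : 𝔤}
    (hxy : p𝔥 ⁅x, y⁆ = 0) :
    curvRt p𝔥 p𝔪 t x y y = (t - t ^ 2) • p𝔪 ⁅y, ⁅x, y⁆⁆ := by
  have hpm : p𝔪 ⁅x, y⁆ = ⁅x, y⁆ := by simpa [hxy] using hsum ⁅x, y⁆
  unfold curvRt
  rw [lie_self, map_zero, smul_zero, lie_zero, map_zero, smul_zero, hpm, hxy, zero_lie,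
    lie_smul, map_smul, ← lie_skew ⁅x, y⁆ y, map_neg]
  module

theorem bilin_proj𝔪_apply_of_mem (hsum : ∀ x, p𝔥 x + p𝔪 x = x) (hmem𝔥 : ∀ x, p𝔥 x ∈ 𝔥)
    (hQ𝔥𝔪 : ∀ x ∈ 𝔥, ∀ y ∈ 𝔪, Q x y = 0) (w : 𝔤) {u : 𝔤} (hu : u ∈ 𝔪) :
    Q (p𝔪 w) u = Q w u := by
  conv_rhs => rw [← hsum w]
  rw [map_add, LinearMap.add_apply, hQ𝔥𝔪 _ (hmem𝔥 w) u hu, zero_add]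

theorem proj𝔥_eq_zero_of_orthogonal (hsum : ∀ x, p𝔥 x + p𝔪 x = x)
    (hmem𝔥 : ∀ x, p𝔥 x ∈ 𝔥) (hmem𝔪 : ∀ x, p𝔪 x ∈ 𝔪) (hQsymm : ∀ x y, Q x y = Q y x)
    (hQ𝔥𝔪 : ∀ x ∈ 𝔥, ∀ y ∈ 𝔪, Q x y = 0) (hQ𝔥nd : ∀ x ∈ 𝔥, (∀ y ∈ 𝔥, Q x y = 0) → x = 0)
    {w : 𝔤} (hw : ∀ y ∈ 𝔥, Q w y = 0) : p𝔥 w = 0 := by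
  refine hQ𝔥nd _ (hmem𝔥 w) fun y hy => ?_
  have hm : Q (p𝔪 w) y = 0 := by rw [hQsymm]; exact hQ𝔥𝔪 y hy _ (hmem𝔪 w)
  rw [← hw y hy, ← add_zero (Q (p𝔥 w) y), ← hm, ← LinearMap.add_apply, ← map_add, hsum]

theorem bilin_lie_eq_zero_of_lie_eq_zero (hQinv : ∀ w u v : 𝔤, Q ⁅w, u⁆ v + Q u ⁅w, v⁆ = 0)
    {v y : 𝔤} (hvy : ⁅y, v⁆ = 0) (x : 𝔤) : Q ⁅v, x⁆ y = 0 := by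
  have hvy' : ⁅v, y⁆ = 0 := by rw [← lie_skew, hvy, neg_zero]
  have h := hQinv v x y
  rwa [hvy', map_zero, add_zero] at h

theorem bilin_lie_lie_self (hQinv : ∀ w u v : 𝔤, Q ⁅w, u⁆ v + Q u ⁅w, v⁆ = 0) (v z : 𝔤) :
    Q ⁅z, ⁅v, z⁆⁆ v = Q ⁅v, z⁆ ⁅v, z⁆ := by
  have h := hQinv z ⁅v, z⁆ v
  rw [← lie_skew z v, map_neg] at h
  linarith

theorem lie_eq_zero_of_forall_lie_eq_zero (hsum : ∀ x, p𝔥 x + p𝔪 x = x)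
    (hmem𝔥 : ∀ x, p𝔥 x ∈ 𝔥) (hmem𝔪 : ∀ x, p𝔪 x ∈ 𝔪) {ι : Type*} {Z : ι → 𝔤}
    (hZspan : Submodule.span ℝ (Set.range Z) = 𝔪) {v : 𝔤} (h𝔥 : ∀ w ∈ 𝔥, ⁅v, w⁆ = 0)
    (hZ : ∀ i, ⁅v, Z i⁆ = 0) (x : 𝔤) : ⁅v, x⁆ = 0 := by
  have h𝔪 : 𝔪 ≤ LinearMap.ker (LieAlgebra.ad ℝ 𝔤 v) := by
    rw [← hZspan, Submodule.span_le]
    rintro _ ⟨i, rfl⟩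
    exact hZ i
  rw [← hsum x, lie_add, h𝔥 _ (hmem𝔥 x), zero_add]
  exact h𝔪 (hmem𝔪 x)

end ReductiveDecomposition

theorem stmt17_general
    {𝔤 : Type*} [LieRing 𝔤] [LieAlgebra ℝ 𝔤]
    (𝔥 𝔪 : Submodule ℝ 𝔤)
    (p𝔥 p𝔪 : 𝔤 →ₗ[ℝ] 𝔤)
    (hsum : ∀ x, p𝔥 x + p𝔪 x = x)
    (hmem𝔥 : ∀ x, p𝔥 x ∈ 𝔥) (hmem𝔪 : ∀ x, p𝔪 x ∈ 𝔪)
    (Q : LinearMap.BilinForm ℝ 𝔤)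
    (hQsymm : ∀ x y, Q x y = Q y x)
    (hQinv : ∀ w u v : 𝔤, Q ⁅w, u⁆ v + Q u ⁅w, v⁆ = 0)
    (hQ𝔥𝔪 : ∀ x ∈ 𝔥, ∀ y ∈ 𝔪, Q x y = 0)
    (hQpos𝔪 : ∀ x ∈ 𝔪, x ≠ 0 → 0 < Q x x)
    (hQ𝔥nd : ∀ x ∈ 𝔥, (∀ y ∈ 𝔥, Q x y = 0) → x = 0)
    {n : ℕ} (Z : Fin n → 𝔤)
    (hZspan : Submodule.span ℝ (Set.range Z) = 𝔪)
    (hβpos : ∀ x ∈ 𝔪, x ≠ 0 →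
      0 < -(LinearMap.trace ℝ 𝔤 ((LieAlgebra.ad ℝ 𝔤 x) ∘ₗ (LieAlgebra.ad ℝ 𝔤 x))))
    (v : 𝔤) (hv𝔪 : v ∈ 𝔪) (hv0 : v ≠ 0)
    (hfix : ∀ w ∈ 𝔥, ⁅w, v⁆ = 0)
    (t : ℝ)
    (hric : ∑ i, Q (curvRt p𝔥 p𝔪 t v (Z i) (Z i)) v = 0) :
    t = 0 ∨ t = 1 := by
  have hproj𝔥 : ∀ x, p𝔥 ⁅v, x⁆ = 0 := fun x =>
    proj𝔥_eq_zero_of_orthogonal hsum hmem𝔥 hmem𝔪 hQsymm hQ𝔥𝔪 hQ𝔥nd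
      fun y hy => bilin_lie_eq_zero_of_lie_eq_zero hQinv (hfix y hy) x
  have hmem : ∀ x, ⁅v, x⁆ ∈ 𝔪 := fun x => by
    rw [← hsum ⁅v, x⁆, hproj𝔥 x, zero_add]
    exact hmem𝔪 _
  have hterm : ∀ i, Q (curvRt p𝔥 p𝔪 t v (Z i) (Z i)) v = (t - t ^ 2) * Q ⁅v, Z i⁆ ⁅v, Z i⁆ :=
    fun i => by
      rw [curvRt_apply_self_of_proj𝔥_eq_zero hsum t (hproj𝔥 (Z i)), map_smul,
        LinearMap.smul_apply, smul_eq_mul, bilin_proj𝔪_apply_of_mem hsum hmem𝔥 hQ𝔥𝔪 _ hv𝔪,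
        bilin_lie_lie_self hQinv]
  have hsq : ∀ x ∈ 𝔪, 0 ≤ Q x x := fun x hx => by
    rcases eq_or_ne x 0 with rfl | hx0
    · simp
    · exact (hQpos𝔪 x hx hx0).le
  have hexists : ∃ i, ⁅v, Z i⁆ ≠ 0 := by
    by_contra! hZ
    have had : LieAlgebra.ad ℝ 𝔤 v = 0 := LinearMap.ext <|
      lie_eq_zero_of_forall_lie_eq_zero hsum hmem𝔥 hmem𝔪 hZspan
        (fun w hw => by rw [← lie_skew, hfix w hw, neg_zero]) hZ
    simpa [had] using hβpos v hv𝔪 hv0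
  have hpos : 0 < ∑ i, Q ⁅v, Z i⁆ ⁅v, Z i⁆ := by
    obtain ⟨i, hi⟩ := hexists
    exact Finset.sum_pos' (fun _ _ => hsq _ (hmem _)) ⟨i, Finset.mem_univ i, hQpos𝔪 _ (hmem _) hi⟩
  have hfactor : (t - t ^ 2) * ∑ i, Q ⁅v, Z i⁆ ⁅v, Z i⁆ = 0 := by
    simpa only [hterm, Finset.mul_sum] using hric
  have ht : t * (1 - t) = 0 := by
    linear_combination (mul_eq_zero.mp hfactor).resolve_right hpos.ne'
  rcases mul_eq_zero.mp ht with h | h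
  · exact Or.inl h
  · exact Or.inr (by linarith)

/-- If `β(X,Y) = −tr_𝔤(ad X ∘ ad Y)` is positive definite on `𝔪` and
`v ∈ 𝔪` is a nonzero vector fixed by the isotropy representation (`[𝔥,v] = 0`), then
`Ric^t(v,v) = 0` forces `t = 0` or `t = 1`: only the canonical and anticanonical
connections can be Ricci-flat. -/
theorem stmt17
    {𝔤 : Type*} [LieRing 𝔤] [LieAlgebra ℝ 𝔤] [FiniteDimensional ℝ 𝔤]
    (𝔥 𝔪 : Submodule ℝ 𝔤)
    (p𝔥 p𝔪 : 𝔤 →ₗ[ℝ] 𝔤)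
    (hsum : ∀ x, p𝔥 x + p𝔪 x = x)
    (hmem𝔥 : ∀ x, p𝔥 x ∈ 𝔥) (hmem𝔪 : ∀ x, p𝔪 x ∈ 𝔪)
    (hid𝔥 : ∀ x ∈ 𝔥, p𝔥 x = x) (hid𝔪 : ∀ x ∈ 𝔪, p𝔪 x = x)
    (hsub : ∀ x ∈ 𝔥, ∀ y ∈ 𝔥, ⁅x, y⁆ ∈ 𝔥)
    (hhm : ∀ x ∈ 𝔥, ∀ y ∈ 𝔪, ⁅x, y⁆ ∈ 𝔪)
    (Q : LinearMap.BilinForm ℝ 𝔤)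
    (hQsymm : ∀ x y, Q x y = Q y x)
    (hQinv : ∀ w u v : 𝔤, Q ⁅w, u⁆ v + Q u ⁅w, v⁆ = 0)
    (hQ𝔥𝔪 : ∀ x ∈ 𝔥, ∀ y ∈ 𝔪, Q x y = 0)
    (hQpos𝔪 : ∀ x ∈ 𝔪, x ≠ 0 → 0 < Q x x)
    (hQ𝔥nd : ∀ x ∈ 𝔥, (∀ y ∈ 𝔥, Q x y = 0) → x = 0)
    {n : ℕ} (Z : Fin n → 𝔤) (hZ𝔪 : ∀ i, Z i ∈ 𝔪)
    (hZon : ∀ i j, Q (Z i) (Z j) = if i = j then 1 else 0)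
    (hZspan : Submodule.span ℝ (Set.range Z) = 𝔪)
    (hβpos : ∀ x ∈ 𝔪, x ≠ 0 →
      0 < -(LinearMap.trace ℝ 𝔤 ((LieAlgebra.ad ℝ 𝔤 x) ∘ₗ (LieAlgebra.ad ℝ 𝔤 x))))
    (v : 𝔤) (hv𝔪 : v ∈ 𝔪) (hv0 : v ≠ 0)
    (hfix : ∀ w ∈ 𝔥, ⁅w, v⁆ = 0)
    (t : ℝ)
    (hric : ∑ i, Q (curvRt p𝔥 p𝔪 t v (Z i) (Z i)) v = 0) :
    t = 0 ∨ t = 1 :=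
  stmt17_general 𝔥 𝔪 p𝔥 p𝔪 hsum hmem𝔥 hmem𝔪 Q hQsymm hQinv hQ𝔥𝔪 hQpos𝔪 hQ𝔥nd Z hZspan hβpos v hv𝔪
    hv0 hfix t hric
end

section
/- Assume that 𝔥 is spanned by the 𝔥-components of brackets of elements of 𝔪, i.e. 𝔥 = span{ [X,Y]_𝔥 : X,Y ∈ 𝔪 }. If the scalar curvature of the canonical connection vanishes, i.e. Σ_{i,j} Q_𝔥([Z_i,Z_j]_𝔥,[Z_i,Z_j]_𝔥) = 0, then Q_𝔥 is neither positive definite nor negative definite; in particular Q is not positive definite on 𝔤, so the metric cannot be normal homogeneous. -/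
/-!
If `Q` were definite on `𝔥`, every term `Q_𝔥([Zᵢ,Zⱼ]_𝔥, [Zᵢ,Zⱼ]_𝔥)` of the vanishing scalar
curvature would have the same sign, so all of them vanish and hence all `[Zᵢ,Zⱼ]_𝔥 = 0`.
By bilinearity `[X,Y]_𝔥 = 0` for all `X, Y ∈ 𝔪`, and since these components span `𝔥`,
`𝔥 = 0`. A negative definite `Q_𝔥` is handled by applying the same argument to `-Q`.
-/

open Submodule

lemma LinearMap.BilinForm.eq_zero_of_sum_apply_self_eq_zero {R M ι : Type*} [CommSemiring R]
    [PartialOrder R] [IsOrderedAddMonoid R] [AddCommMonoid M] [Module R M] [Fintype ι]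
    {Q : LinearMap.BilinForm R M} {N : Submodule R M} (hQ : ∀ x ∈ N, x ≠ 0 → 0 < Q x x)
    {v : ι → M} (hv : ∀ i, v i ∈ N) (hsum : ∑ i, Q (v i) (v i) = 0) (i : ι) : v i = 0 := by
  have hnonneg : 0 ≤ fun i ↦ Q (v i) (v i) := fun i ↦ by
    by_cases h : v i = 0
    · simp [h]
    · exact (hQ _ (hv i) h).le
  by_contra h
  exact (hQ _ (hv i) h).ne' (congrFun ((Fintype.sum_eq_zero_iff_of_nonneg hnonneg).mp hsum) i)

lemma LieAlgebra.map_lie_eq_zero_of_mem_span {R L M : Type*} [CommRing R] [LieRing L]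
    [LieAlgebra R L] [AddCommGroup M] [Module R M] (f : L →ₗ[R] M) {s : Set L}
    (h : ∀ x ∈ s, ∀ y ∈ s, f ⁅x, y⁆ = 0) {x y : L} (hx : x ∈ span R s) (hy : y ∈ span R s) :
    f ⁅x, y⁆ = 0 := by
  simpa using LinearMap.BilinMap.apply_apply_mem_of_mem_span ⊥ s s
    ((LieModule.toEnd R L L : L →ₗ[R] Module.End R L).compr₂ f) (by simpa using h) x y hx hy

lemma LieAlgebra.span_map_lie_eq_bot {R L M : Type*} [CommRing R] [LieRing L]
    [LieAlgebra R L] [AddCommGroup M] [Module R M] (f : L →ₗ[R] M) {s : Set L}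
    (h : ∀ x ∈ s, ∀ y ∈ s, f ⁅x, y⁆ = 0) :
    span R {w | ∃ x ∈ span R s, ∃ y ∈ span R s, f ⁅x, y⁆ = w} = ⊥ := by
  rw [span_eq_bot]
  rintro _ ⟨x, hx, y, hy, rfl⟩
  exact map_lie_eq_zero_of_mem_span f h hx hy

theorem stmt18_general
    {𝔤 : Type*} [LieRing 𝔤] [LieAlgebra ℝ 𝔤]
    (𝔥 𝔪 : Submodule ℝ 𝔤)
    (p𝔥 : 𝔤 →ₗ[ℝ] 𝔤)
    (hmem𝔥 : ∀ x, p𝔥 x ∈ 𝔥)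
    (Q : LinearMap.BilinForm ℝ 𝔤)
    {n : ℕ} (Z : Fin n → 𝔤)
    (hZspan : Submodule.span ℝ (Set.range Z) = 𝔪)
    (h𝔥ne : 𝔥 ≠ ⊥)
    (h𝔥span : 𝔥 = Submodule.span ℝ {w : 𝔤 | ∃ x ∈ 𝔪, ∃ y ∈ 𝔪, p𝔥 ⁅x, y⁆ = w})
    (hscal : ∑ i, ∑ j, Q (p𝔥 ⁅Z i, Z j⁆) (p𝔥 ⁅Z i, Z j⁆) = 0) :
    ¬ (∀ x ∈ 𝔥, x ≠ 0 → 0 < Q x x) ∧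
    ¬ (∀ x ∈ 𝔥, x ≠ 0 → Q x x < 0) ∧
    ¬ (∀ x : 𝔤, x ≠ 0 → 0 < Q x x) := by
  have not_posDef : ∀ B : LinearMap.BilinForm ℝ 𝔤, (∀ x ∈ 𝔥, x ≠ 0 → 0 < B x x) →
      ∑ i, ∑ j, B (p𝔥 ⁅Z i, Z j⁆) (p𝔥 ⁅Z i, Z j⁆) = 0 → False := by
    intro B hB hsum
    rw [← Fintype.sum_prod_type'] at hsum
    have hbracket : ∀ i j, p𝔥 ⁅Z i, Z j⁆ = 0 := fun i j ↦
      B.eq_zero_of_sum_apply_self_eq_zero hB (fun ij ↦ hmem𝔥 ⁅Z ij.1, Z ij.2⁆) hsum (i, j)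
    refine h𝔥ne ?_
    rw [h𝔥span, ← hZspan]
    exact LieAlgebra.span_map_lie_eq_bot p𝔥 (by rintro _ ⟨i, rfl⟩ _ ⟨j, rfl⟩; exact hbracket i j)
  refine ⟨fun hpos ↦ not_posDef Q hpos hscal, fun hneg ↦ not_posDef (-Q) ?_ ?_,
    fun hpos ↦ not_posDef Q (fun x _ hx ↦ hpos x hx) hscal⟩
  · simpa using hneg
  · simp [hscal]

/-- Assume `𝔥` is nontrivial and spanned by the `𝔥`-components of
brackets of elements of `𝔪`.  If the scalar curvature of the canonical connection
vanishes, `Σ_{i,j} Q_𝔥([Z_i,Z_j]_𝔥,[Z_i,Z_j]_𝔥) = 0`, then `Q_𝔥` is neither positive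
definite nor negative definite on `𝔥`; in particular `Q` is not positive definite
on `𝔤`, so the metric cannot be normal homogeneous. -/
theorem stmt18
    {𝔤 : Type*} [LieRing 𝔤] [LieAlgebra ℝ 𝔤] [FiniteDimensional ℝ 𝔤]
    (𝔥 𝔪 : Submodule ℝ 𝔤)
    (p𝔥 p𝔪 : 𝔤 →ₗ[ℝ] 𝔤)
    (hsum : ∀ x, p𝔥 x + p𝔪 x = x)
    (hmem𝔥 : ∀ x, p𝔥 x ∈ 𝔥) (hmem𝔪 : ∀ x, p𝔪 x ∈ 𝔪)
    (hid𝔥 : ∀ x ∈ 𝔥, p𝔥 x = x) (hid𝔪 : ∀ x ∈ 𝔪, p𝔪 x = x)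
    (hsub : ∀ x ∈ 𝔥, ∀ y ∈ 𝔥, ⁅x, y⁆ ∈ 𝔥)
    (hhm : ∀ x ∈ 𝔥, ∀ y ∈ 𝔪, ⁅x, y⁆ ∈ 𝔪)
    (Q : LinearMap.BilinForm ℝ 𝔤)
    (hQsymm : ∀ x y, Q x y = Q y x)
    (hQinv : ∀ w u v : 𝔤, Q ⁅w, u⁆ v + Q u ⁅w, v⁆ = 0)
    (hQ𝔥𝔪 : ∀ x ∈ 𝔥, ∀ y ∈ 𝔪, Q x y = 0)
    (hQpos𝔪 : ∀ x ∈ 𝔪, x ≠ 0 → 0 < Q x x)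
    (hQ𝔥nd : ∀ x ∈ 𝔥, (∀ y ∈ 𝔥, Q x y = 0) → x = 0)
    {n : ℕ} (Z : Fin n → 𝔤) (hZ𝔪 : ∀ i, Z i ∈ 𝔪)
    (hZon : ∀ i j, Q (Z i) (Z j) = if i = j then 1 else 0)
    (hZspan : Submodule.span ℝ (Set.range Z) = 𝔪)
    (h𝔥ne : 𝔥 ≠ ⊥)
    (h𝔥span : 𝔥 = Submodule.span ℝ {w : 𝔤 | ∃ x ∈ 𝔪, ∃ y ∈ 𝔪, p𝔥 ⁅x, y⁆ = w})
    (hscal : ∑ i, ∑ j, Q (p𝔥 ⁅Z i, Z j⁆) (p𝔥 ⁅Z i, Z j⁆) = 0) :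
    ¬ (∀ x ∈ 𝔥, x ≠ 0 → 0 < Q x x) ∧
    ¬ (∀ x ∈ 𝔥, x ≠ 0 → Q x x < 0) ∧
    ¬ (∀ x : 𝔤, x ≠ 0 → 0 < Q x x) :=
  stmt18_general 𝔥 𝔪 p𝔥 hmem𝔥 Q Z hZspan h𝔥ne h𝔥span hscal
end
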